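/- arXiv:1102.2072 — 10 statements merged into one kernel-verified Lean document; each statement's English description precedes it below -/
import Mathlib

section
/- For every n ≥ 2 and every r > 0, as an identity in [0,∞]: E|T_n|^r = (r/2) · n · (n−1)^{r/2} · ∫_0^n z^{r/2−1} P(U_n* > z) (n−z)^{−(r/2+1)} dz. -/
open MeasureTheory ProbabilityTheory Filter

noncomputable section

/-- The partial sum `S_n = ∑_{i=1}^n X_i`. -/
def Sn {Ω : Type*} (X : ℕ → Ω → ℝ) (n : ℕ) (ω : Ω) : ℝ :=
  ∑ i ∈ Finset.range n, X i ω

/-- `V_n = (∑_{i=1}^n X_i²)^{1/2}`. -/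
def Vn {Ω : Type*} (X : ℕ → Ω → ℝ) (n : ℕ) (ω : Ω) : ℝ :=
  Real.sqrt (∑ i ∈ Finset.range n, (X i ω) ^ 2)

/-- The sample variance `σ̂_n² = (1/(n-1)) ∑_{i=1}^n (X_i - S_n/n)²`. -/
def sigmaSq {Ω : Type*} (X : ℕ → Ω → ℝ) (n : ℕ) (ω : Ω) : ℝ :=
  (1 / ((n : ℝ) - 1)) * ∑ i ∈ Finset.range n, (X i ω - Sn X n ω / n) ^ 2

/-- Student's t-statistic `T_n = n^{-1/2} σ̂_n^{-1} S_n` when `σ̂_n > 0`, and `0` otherwise. -/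
def Tstat {Ω : Type*} (X : ℕ → Ω → ℝ) (n : ℕ) (ω : Ω) : ℝ :=
  if 0 < sigmaSq X n ω then Sn X n ω / (Real.sqrt n * Real.sqrt (sigmaSq X n ω)) else 0

/-- `U_n* = (S_n/V_n)²` if `V_n > 0` and `(S_n/V_n)² ≠ n`, and `U_n* = 0` otherwise. -/
def Ustar {Ω : Type*} (X : ℕ → Ω → ℝ) (n : ℕ) (ω : Ω) : ℝ :=
  if 0 < Vn X n ω ∧ (Sn X n ω / Vn X n ω) ^ 2 ≠ (n : ℝ) then (Sn X n ω / Vn X n ω) ^ 2 else 0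

/-!
Since `(n - 1) σ̂_n² = V_n² - S_n² / n`, with `U = S_n² / V_n²` one gets
`T_n² = (n - 1) U / (n - U)` whenever `S_n² < n V_n²`; otherwise (`V_n = 0`, or all `X_i` equal)
both `T_n` and `U_n*` vanish. Hence `|T_n|^r = g(U_n*)` pointwise, where
`g u = ((n - 1) u / (n - u))^(r/2)` increases strictly from `g 0 = 0` onto `[0, ∞)` on `[0, n)`.
The layer-cake formula `E g(U) = ∫_0^∞ P(g(U) > t) dt` and the substitution `t = g z` give the
identity, the density being `g' z = (r/2) n (n - 1)^(r/2) z^(r/2 - 1) (n - z)^(-(r/2 + 1))`.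
-/

open Set

theorem lintegral_comp_eq_setLIntegral_deriv_mul_meas_lt {α : Type*} [MeasurableSpace α]
    (μ : Measure α) {U : α → ℝ} {g g' : ℝ → ℝ} {a b : ℝ} (hU : Measurable U)
    (hUab : ∀ ω, U ω ∈ Ico a b) (hg : Measurable g) (hga : 0 ≤ g a)
    (hmono : StrictMonoOn g (Ico a b)) (himg : g '' Ioo a b = Ioi 0)
    (hderiv : ∀ x ∈ Ioo a b, HasDerivAt g (g' x) x) :
    ∫⁻ ω, ENNReal.ofReal (g (U ω)) ∂μ =
      ∫⁻ z in Ioo a b, ENNReal.ofReal (g' z) * μ {ω | z < U ω} := by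
  have hgU (ω : α) : 0 ≤ g (U ω) :=
    hga.trans <| hmono.monotoneOn (left_mem_Ico.2 <| (hUab ω).1.trans_lt (hUab ω).2) (hUab ω)
      (hUab ω).1
  have hg'_nonneg (x : ℝ) (hx : x ∈ Ioo a b) : 0 ≤ g' x := by
    refine (hderiv x hx).hasDerivWithinAt.nonneg_of_monotoneOn ?_
      (hmono.monotoneOn.mono Ioo_subset_Ico_self)
    exact accPt_iff_frequently_nhdsNE.2
      (eventually_nhdsWithin_of_eventually_nhds (isOpen_Ioo.eventually_mem hx)).frequently
  calc ∫⁻ ω, ENNReal.ofReal (g (U ω)) ∂μ = ∫⁻ t in Ioi 0, μ {ω | t < g (U ω)} :=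
        lintegral_eq_lintegral_meas_lt μ (.of_forall hgU) (hg.comp hU).aemeasurable
    _ = ∫⁻ t in g '' Ioo a b, μ {ω | t < g (U ω)} := by rw [himg]
    _ = ∫⁻ z in Ioo a b, ENNReal.ofReal |g' z| * μ {ω | g z < g (U ω)} :=
        lintegral_image_eq_lintegral_abs_deriv_mul measurableSet_Ioo
          (fun x hx => (hderiv x hx).hasDerivWithinAt)
          (hmono.injOn.mono Ioo_subset_Ico_self) _
    _ = _ := setLIntegral_congr_fun measurableSet_Ioo fun z hz => by
        simp only [abs_of_nonneg (hg'_nonneg z hz),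
          hmono.lt_iff_lt (Ioo_subset_Ico_self hz) (hUab _)]

section Deterministic

variable {Ω : Type*} (X : ℕ → Ω → ℝ) (n : ℕ) (ω : Ω)

theorem Vn_sq : Vn X n ω ^ 2 = ∑ i ∈ Finset.range n, X i ω ^ 2 :=
  Real.sq_sqrt (by positivity)

theorem Sn_sq_le_mul_Vn_sq : Sn X n ω ^ 2 ≤ n * Vn X n ω ^ 2 := by
  rw [Vn_sq]
  simpa [Sn] using sq_sum_le_card_mul_sum_sq (s := Finset.range n) (f := fun i => X i ω)

theorem sigmaSq_eq : sigmaSq X n ω = (Vn X n ω ^ 2 - Sn X n ω ^ 2 / n) / (n - 1) := by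
  rcases Nat.eq_zero_or_pos n with rfl | hn
  · simp [sigmaSq, Vn, Sn]
  have hn : (n : ℝ) ≠ 0 := by positivity
  have hS : ∑ i ∈ Finset.range n, X i ω = Sn X n ω := rfl
  simp only [sigmaSq, Vn_sq, hS, sub_sq, Finset.sum_add_distrib, Finset.sum_sub_distrib,
    ← Finset.sum_mul, ← Finset.mul_sum, Finset.sum_const, Finset.card_range, nsmul_eq_mul]
  field_simp
  ring

theorem Ustar_nonneg : 0 ≤ Ustar X n ω := by
  unfold Ustar
  split_ifs <;> positivity

theorem Ustar_lt (hn : 0 < n) : Ustar X n ω < n := by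
  unfold Ustar
  split_ifs with h
  · refine lt_of_le_of_ne ?_ h.2
    rw [div_pow, div_le_iff₀ (by positivity [h.1])]
    exact Sn_sq_le_mul_Vn_sq X n ω
  · exact_mod_cast hn

theorem Ustar_eq_of_Sn_sq_lt (h : Sn X n ω ^ 2 < n * Vn X n ω ^ 2) :
    Ustar X n ω = Sn X n ω ^ 2 / Vn X n ω ^ 2 := by
  have hV : Vn X n ω ≠ 0 := fun hV => by
    rw [hV] at h
    nlinarith [sq_nonneg (Sn X n ω)]
  replace hV : 0 < Vn X n ω := (Real.sqrt_nonneg _).lt_of_ne' hV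
  have hne : Sn X n ω ^ 2 / Vn X n ω ^ 2 ≠ n := by
    rw [Ne, div_eq_iff (by positivity)]
    exact h.ne
  rw [Ustar, if_pos ⟨hV, by rwa [div_pow]⟩, div_pow]

theorem Ustar_eq_zero_of_le_Sn_sq (h : n * Vn X n ω ^ 2 ≤ Sn X n ω ^ 2) : Ustar X n ω = 0 := by
  rw [Ustar, if_neg]
  rintro ⟨hV, hne⟩
  refine hne ?_
  rw [div_pow, div_eq_iff (by positivity)]
  linarith [Sn_sq_le_mul_Vn_sq X n ω]

theorem measurable_Ustar [MeasurableSpace Ω] (hX : ∀ i, Measurable (X i)) :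
    Measurable (Ustar X n) := by
  have hS : Measurable (Sn X n) := Finset.measurable_sum _ fun i _ => hX i
  have hV : Measurable (Vn X n) := (Finset.measurable_sum _ fun i _ => (hX i).pow_const 2).sqrt
  have hQ : Measurable fun ω => (Sn X n ω / Vn X n ω) ^ 2 := (hS.div hV).pow_const 2
  exact Measurable.ite ((measurableSet_lt measurable_const hV).inter
    (hQ (measurableSet_singleton _)).compl) hQ measurable_const

theorem Tstat_sq_eq (hn : 1 < n) :
    Tstat X n ω ^ 2 = (n - 1) * Ustar X n ω / (n - Ustar X n ω) := by
  have hN : (1 : ℝ) < n := by exact_mod_cast hn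
  rcases lt_or_ge (Sn X n ω ^ 2) (n * Vn X n ω ^ 2) with h | h
  · have hσ : 0 < sigmaSq X n ω := by
      rw [sigmaSq_eq, sub_div' (by positivity)]
      exact div_pos (div_pos (by linarith) (by positivity)) (by linarith)
    have hV : 0 < Vn X n ω ^ 2 := by nlinarith [sq_nonneg (Sn X n ω)]
    rw [Tstat, if_pos hσ, Ustar_eq_of_Sn_sq_lt X n ω h, div_pow, mul_pow,
      Real.sq_sqrt (by positivity), Real.sq_sqrt hσ.le, sigmaSq_eq]
    have : Vn X n ω ≠ 0 := fun h0 => by simp [h0] at hV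
    field_simp
  · have hσ : ¬ 0 < sigmaSq X n ω := by
      rw [sigmaSq_eq, sub_div' (by positivity), not_lt]
      exact div_nonpos_of_nonpos_of_nonneg (div_nonpos_of_nonpos_of_nonneg (by linarith)
        (by positivity)) (by linarith)
    simp [Tstat, if_neg hσ, Ustar_eq_zero_of_le_Sn_sq X n ω h]

end Deterministic

def tstatPowOfUstar (N p u : ℝ) : ℝ := ((N - 1) * u / (N - u)) ^ p

theorem abs_Tstat_rpow_eq {Ω : Type*} (X : ℕ → Ω → ℝ) {n : ℕ} (hn : 1 < n) (ω : Ω)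
    (r : ℝ) :
    |Tstat X n ω| ^ r = tstatPowOfUstar n (r / 2) (Ustar X n ω) := by
  rw [tstatPowOfUstar, ← Tstat_sq_eq X n ω hn, ← sq_abs, ← Real.rpow_natCast,
    ← Real.rpow_mul (abs_nonneg _)]
  congr 1
  push_cast
  ring

section Transform

variable {N p : ℝ}

theorem measurable_tstatPowOfUstar : Measurable (tstatPowOfUstar N p) := by
  unfold tstatPowOfUstar
  fun_prop

theorem strictMonoOn_tstatPowOfUstar (hN : 1 < N) (hp : 0 < p) :
    StrictMonoOn (tstatPowOfUstar N p) (Ico 0 N) := by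
  rintro a ⟨ha0, haN⟩ b ⟨-, hbN⟩ hab
  refine Real.rpow_lt_rpow (div_nonneg (by nlinarith) (by linarith)) ?_ hp
  rw [div_lt_div_iff₀ (by linarith) (by linarith)]
  nlinarith [mul_pos (mul_pos (sub_pos.2 hN) (by linarith : 0 < N)) (sub_pos.2 hab)]

theorem image_tstatPowOfUstar_Ioo (hN : 1 < N) (hp : 0 < p) :
    tstatPowOfUstar N p '' Ioo 0 N = Ioi 0 := by
  refine Subset.antisymm ?_ fun t (ht : 0 < t) => ?_
  · rintro _ ⟨z, ⟨hz0, hzN⟩, rfl⟩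
    exact Real.rpow_pos_of_pos (div_pos (by nlinarith) (by linarith)) p
  -- `s ↦ N s / (N - 1 + s)` inverts `u ↦ (N - 1) u / (N - u)`
  set s := t ^ p⁻¹
  have hs : 0 < s := Real.rpow_pos_of_pos ht _
  have hN1 : 0 < N - 1 := sub_pos.2 hN
  have hD : 0 < N - 1 + s := by linarith
  have hinv : (N - 1) * (N * s / (N - 1 + s)) / (N - N * s / (N - 1 + s)) = s := by
    have hden : N - N * s / (N - 1 + s) = N * (N - 1) / (N - 1 + s) := by
      field_simp
      ring
    rw [hden]
    field_simp
  refine ⟨N * s / (N - 1 + s), ⟨div_pos (by nlinarith) hD, ?_⟩, ?_⟩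
  · rw [div_lt_iff₀ hD]
    nlinarith
  · rw [tstatPowOfUstar, hinv, ← Real.rpow_mul ht.le, inv_mul_cancel₀ hp.ne', Real.rpow_one]

theorem hasDerivAt_tstatPowOfUstar (hN : 1 < N) {z : ℝ} (hz : z ∈ Ioo 0 N) :
    HasDerivAt (tstatPowOfUstar N p)
      (p * N * (N - 1) ^ p * (z ^ (p - 1) * (N - z) ^ (-(p + 1)))) z := by
  obtain ⟨hz0, hzN⟩ := hz
  have hNz : 0 < N - z := sub_pos.2 hzN
  have hN1 : 0 < N - 1 := sub_pos.2 hN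
  have hbase : HasDerivAt (fun u => (N - 1) * u / (N - u)) ((N - 1) * N / (N - z) ^ 2) z := by
    refine (((hasDerivAt_id' z).const_mul (N - 1)).div ((hasDerivAt_id' z).const_sub N)
      hNz.ne').congr_deriv ?_
    ring
  show HasDerivAt (fun u => ((N - 1) * u / (N - u)) ^ p) _ z
  convert hbase.rpow_const (p := p) (Or.inl (div_pos (mul_pos hN1 hz0) hNz).ne') using 1
  rw [Real.div_rpow (by positivity) hNz.le, Real.mul_rpow hN1.le hz0.le, Real.rpow_neg hNz.le,
    Real.rpow_add_one hNz.ne', Real.rpow_sub_one hN1.ne', Real.rpow_sub_one hz0.ne',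
    Real.rpow_sub_one hNz.ne']
  have := Real.rpow_pos_of_pos hNz p
  field_simp

end Transform

theorem lintegral_abs_tstat_rpow_eq_general {Ω : Type*} [MeasurableSpace Ω]
    (P : Measure Ω)
    (X : ℕ → Ω → ℝ) (hmeas : ∀ i, Measurable (X i))
    (n : ℕ) (hn : 2 ≤ n) (r : ℝ) (hr : 0 < r) :
    ∫⁻ ω, ENNReal.ofReal (|Tstat X n ω| ^ r) ∂P
      = ENNReal.ofReal (r / 2 * n * ((n : ℝ) - 1) ^ (r / 2)) *
        ∫⁻ z in Set.Ioo (0 : ℝ) n,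
          ENNReal.ofReal (z ^ (r / 2 - 1) * ((n : ℝ) - z) ^ (-(r / 2 + 1))) *
            P {ω | Ustar X n ω > z} := by
  have hN : (1 : ℝ) < n := by exact_mod_cast hn
  have hp : 0 < r / 2 := half_pos hr
  simp_rw [abs_Tstat_rpow_eq X hn]
  rw [lintegral_comp_eq_setLIntegral_deriv_mul_meas_lt P (measurable_Ustar X n hmeas)
    (fun ω => ⟨Ustar_nonneg X n ω, Ustar_lt X n ω (by omega)⟩) measurable_tstatPowOfUstar
    (by simp [tstatPowOfUstar, Real.zero_rpow hp.ne']) (strictMonoOn_tstatPowOfUstar hN hp)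
    (image_tstatPowOfUstar_Ioo hN hp) fun z hz => hasDerivAt_tstatPowOfUstar hN hz,
    ← lintegral_const_mul' _ _ ENNReal.ofReal_ne_top]
  refine setLIntegral_congr_fun measurableSet_Ioo fun z hz => ?_
  rw [ENNReal.ofReal_mul (by positivity), mul_assoc]

/-- For i.i.d. `X_i`, every `n ≥ 2` and every `r > 0`, as an identity in `[0,∞]`:
`E|T_n|^r = (r/2)·n·(n−1)^{r/2} ∫_0^n z^{r/2−1} P(U_n* > z) (n−z)^{−(r/2+1)} dz`. -/
theorem lintegral_abs_tstat_rpow_eq {Ω : Type*} [MeasurableSpace Ω]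
    (P : Measure Ω) [IsProbabilityMeasure P]
    (X : ℕ → Ω → ℝ) (hmeas : ∀ i, Measurable (X i))
    (hindep : iIndepFun X P)
    (hident : ∀ i, IdentDistrib (X i) (X 0) P P)
    (n : ℕ) (hn : 2 ≤ n) (r : ℝ) (hr : 0 < r) :
    ∫⁻ ω, ENNReal.ofReal (|Tstat X n ω| ^ r) ∂P
      = ENNReal.ofReal (r / 2 * n * ((n : ℝ) - 1) ^ (r / 2)) *
        ∫⁻ z in Set.Ioo (0 : ℝ) n,
          ENNReal.ofReal (z ^ (r / 2 - 1) * ((n : ℝ) - z) ^ (-(r / 2 + 1))) *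
            P {ω | Ustar X n ω > z} :=
  lintegral_abs_tstat_rpow_eq_general P X hmeas n hn r hr

end
end

section
/- For every n ≥ 2 and every h ∈ (0,1), the infimum of n − u_n(x) over all x = (x_1,…,x_n) ∈ ℝⁿ with x_1 ≠ 0 and |x_2 − x_1| ≥ h|x_1| equals h²/(2 + 2h + h²), and this infimum is attained; consequently the constant C_1(h) = √(2 + 2h + h²) is optimal in the implication 'n − u_n(x) < h² and x_1 ≠ 0 imply |x_i − x_1| < C_1 h |x_1| for all i ≥ 2'. -/
/-!
Write `Q` and `S` for the sum of squares and the sum of the first `n` coordinates. Appending a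
coordinate `y` raises `u` by at most `1`, with equality iff `y = Q / S`, since the difference is
`(Q - S y)² ≥ 0` up to a positive factor. Hence `n - u_n(x)` is monotone in `n` and bounded below
by `2 - u_2(x) = (x₂ - x₁)² / (x₁² + x₂²)`, which under `|x₂ - x₁| ≥ h|x₁|` is at least
`h² / (2 + 2h + h²)`. Equality holds for `x = (1, 1 + h, c, …, c)` with `c = Q / S` of the first
two coordinates. For `1 ≤ C`, taking `1 + C h` instead of `1 + h` as second coordinate gives a
vector with `n - u_n(x) < h²` and `|x₂ - x₁| = C h |x₁|` as long as `C² < 2 + 2h + h²`.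
-/

open MeasureTheory Filter

noncomputable section

/-- `u_n(x) = (∑_{i=1}^n x_i)² / ∑_{i=1}^n x_i²` for a vector `x = (x_1, …, x_n)`. -/
def uFun (n : ℕ) (x : ℕ → ℝ) : ℝ :=
  (∑ i ∈ Finset.range n, x i) ^ 2 / ∑ i ∈ Finset.range n, (x i) ^ 2

open Finset

theorem uFun_succ_le (n : ℕ) (x : ℕ → ℝ) : uFun (n + 1) x ≤ uFun n x + 1 := by
  unfold uFun
  rw [sum_range_succ, sum_range_succ]
  set S := ∑ i ∈ range n, x i
  set Q := ∑ i ∈ range n, x i ^ 2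
  have hQ : 0 ≤ Q := sum_nonneg fun i _ => sq_nonneg (x i)
  rcases hQ.eq_or_lt with hQ0 | hQpos
  · have hS : S = 0 := by
      have hCS : S ^ 2 ≤ #(range n) * Q := sq_sum_le_card_mul_sum_sq
      rw [← hQ0, mul_zero] at hCS
      exact pow_eq_zero_iff two_ne_zero |>.mp (le_antisymm hCS (sq_nonneg _))
    rw [hS, ← hQ0, zero_add, zero_add, div_zero, zero_add]
    exact div_self_le_one _
  · rw [div_add_one hQpos.ne', div_le_div_iff₀ (by positivity) hQpos]
    nlinarith [sq_nonneg (Q - S * x n)]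

theorem monotone_natCast_sub_uFun (x : ℕ → ℝ) : Monotone fun n : ℕ => (n : ℝ) - uFun n x :=
  monotone_nat_of_le_succ fun n => by push_cast; linarith [uFun_succ_le n x]

-- The equality case of `uFun_succ_le`, iterated: appending `Q / S` does not change `Q / S`.
theorem natCast_sub_uFun_of_tail_eq {m n : ℕ} (hmn : m ≤ n) {x : ℕ → ℝ}
    (hS : ∑ i ∈ range m, x i ≠ 0) (hQ : 0 < ∑ i ∈ range m, x i ^ 2)
    (htail : ∀ i ∈ Ico m n, x i = (∑ i ∈ range m, x i ^ 2) / ∑ i ∈ range m, x i) :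
    (n : ℝ) - uFun n x = m - uFun m x := by
  set S := ∑ i ∈ range m, x i
  set Q := ∑ i ∈ range m, x i ^ 2
  have hk : ((Ico m n).card : ℝ) = n - m := by simp [Nat.cast_sub hmn]
  have hSn : ∑ i ∈ range n, x i = S + (n - m) * (Q / S) := by
    rw [← sum_range_add_sum_Ico _ hmn, sum_congr rfl htail, sum_const, nsmul_eq_mul, hk]
  have hQn : ∑ i ∈ range n, x i ^ 2 = Q + (n - m) * (Q / S) ^ 2 := by
    have hsq : ∀ i ∈ Ico m n, x i ^ 2 = (Q / S) ^ 2 := fun i hi => by rw [htail i hi]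
    rw [← sum_range_add_sum_Ico _ hmn, sum_congr rfl hsq, sum_const, nsmul_eq_mul, hk]
  have hnm : (0 : ℝ) ≤ n - m := by simp [hmn]
  have : 0 < S ^ 2 + (n - m) * Q := by positivity
  change (n : ℝ) - (∑ i ∈ range n, x i) ^ 2 / ∑ i ∈ range n, x i ^ 2 = m - S ^ 2 / Q
  rw [hSn, hQn]
  field_simp
  ring

theorem sq_mul_sq_add_sq_le {h a b : ℝ} (hh : 0 ≤ h) (hab : h * |a| ≤ |b - a|) :
    h ^ 2 * (a ^ 2 + b ^ 2) ≤ (2 + 2 * h + h ^ 2) * (b - a) ^ 2 := by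
  have hsq : h ^ 2 * a ^ 2 ≤ (b - a) ^ 2 := by
    rw [← sq_abs a, ← sq_abs (b - a), ← mul_pow]
    exact pow_le_pow_left₀ (by positivity) hab 2
  have hcross : h ^ 2 * (a * (b - a)) ≤ h * (b - a) ^ 2 := calc
    h ^ 2 * (a * (b - a)) ≤ h ^ 2 * |a * (b - a)| := by gcongr; exact le_abs_self _
    _ = h * (h * |a|) * |b - a| := by rw [abs_mul]; ring
    _ ≤ h * |b - a| * |b - a| := by gcongr
    _ = h * (b - a) ^ 2 := by rw [mul_assoc, ← pow_two, sq_abs]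
  nlinarith

theorem two_sub_uFun_two {x : ℕ → ℝ} (hx : x 0 ^ 2 + x 1 ^ 2 ≠ 0) :
    2 - uFun 2 x = (x 1 - x 0) ^ 2 / (x 0 ^ 2 + x 1 ^ 2) := by
  simp only [uFun, sum_range_succ, range_zero, sum_empty, zero_add]
  field_simp
  ring

theorem div_le_natCast_sub_uFun {n : ℕ} (hn : 2 ≤ n) {h : ℝ} (hh : 0 ≤ h) {x : ℕ → ℝ}
    (hx0 : x 0 ≠ 0) (hgap : h * |x 0| ≤ |x 1 - x 0|) :
    h ^ 2 / (2 + 2 * h + h ^ 2) ≤ n - uFun n x := by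
  have hQ : 0 < x 0 ^ 2 + x 1 ^ 2 := by positivity
  calc h ^ 2 / (2 + 2 * h + h ^ 2) ≤ (x 1 - x 0) ^ 2 / (x 0 ^ 2 + x 1 ^ 2) := by
        rw [div_le_div_iff₀ (by positivity) hQ]
        linarith [sq_mul_sq_add_sq_le hh hgap]
    _ = 2 - uFun 2 x := (two_sub_uFun_two hQ.ne').symm
    _ ≤ n - uFun n x := by exact_mod_cast monotone_natCast_sub_uFun x hn

theorem exists_natCast_sub_uFun_eq {n : ℕ} (hn : 2 ≤ n) {g : ℝ} (hg : 0 ≤ g) :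
    ∃ x : ℕ → ℝ, x 0 = 1 ∧ x 1 = 1 + g ∧ (n : ℝ) - uFun n x = g ^ 2 / (2 + 2 * g + g ^ 2) := by
  let x : ℕ → ℝ
    | 0 => 1
    | 1 => 1 + g
    | _ => (2 + 2 * g + g ^ 2) / (2 + g)
  have hQ : 0 < ∑ i ∈ range 2, x i ^ 2 := by simp [x, sum_range_succ]; positivity
  refine ⟨x, rfl, rfl, ?_⟩
  rw [natCast_sub_uFun_of_tail_eq hn (by simp [x, sum_range_succ]; positivity) hQ, Nat.cast_ofNat,
    two_sub_uFun_two (by simpa [x, sum_range_succ] using hQ.ne')]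
  · simp only [x]
    ring
  · intro i hi
    obtain ⟨k, rfl⟩ := Nat.exists_eq_add_of_le' (mem_Ico.mp hi).1
    simp only [x, sum_range_succ, range_zero, sum_empty]
    ring

theorem sq_div_lt_sq_of_sq_lt {h K : ℝ} (hh : h ∈ Set.Ioo 0 1) (hK1 : 1 ≤ K)
    (hK : K ^ 2 < 2 + 2 * h + h ^ 2) :
    (K * h) ^ 2 / (2 + 2 * (K * h) + (K * h) ^ 2) < h ^ 2 := by
  obtain ⟨hh0, hh1⟩ := hh
  rw [div_lt_iff₀ (by positivity)]
  -- `(2 + 2h + h²)(1 - h²) ≤ 2 + 2h ≤ 2 + 2Kh`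
  have hK' : K ^ 2 * (1 - h ^ 2) < (2 + 2 * h + h ^ 2) * (1 - h ^ 2) :=
    mul_lt_mul_of_pos_right hK (by nlinarith)
  have hK_lt : K ^ 2 < 2 + 2 * (K * h) + (K * h) ^ 2 := by
    nlinarith [mul_le_mul_of_nonneg_right hK1 hh0.le]
  nlinarith [mul_pos hh0 hh0]

/-- The infimum of `n − u_n(x)` over all vectors `x` with `x_1 ≠ 0` and
`|x_2 − x_1| ≥ h|x_1|` equals `h²/(2 + 2h + h²)` and is attained; consequently the constant
`C₁(h) = √(2 + 2h + h²)` is optimal in the implication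
"`n − u_n(x) < h²` and `x_1 ≠ 0` imply `|x_i − x_1| < C₁·h·|x_1|` for all `i ≥ 2`". -/
theorem isLeast_n_sub_u_and_optimal (n : ℕ) (hn : 2 ≤ n) (h : ℝ)
    (hh : h ∈ Set.Ioo (0 : ℝ) 1) :
    IsLeast {v : ℝ | ∃ x : ℕ → ℝ, x 0 ≠ 0 ∧ h * |x 0| ≤ |x 1 - x 0| ∧
        v = (n : ℝ) - uFun n x}
      (h ^ 2 / (2 + 2 * h + h ^ 2)) ∧
    ∀ C : ℝ, C < Real.sqrt (2 + 2 * h + h ^ 2) →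
      ∃ x : ℕ → ℝ, x 0 ≠ 0 ∧ (n : ℝ) - uFun n x < h ^ 2 ∧
        ∃ i, 1 ≤ i ∧ i < n ∧ C * h * |x 0| ≤ |x i - x 0| := by
  have hh0 : 0 < h := hh.1
  refine ⟨⟨?_, ?_⟩, fun C hC => ?_⟩
  · obtain ⟨x, hx0, hx1, hval⟩ := exists_natCast_sub_uFun_eq hn hh0.le
    exact ⟨x, by simp [hx0], by simp [hx0, hx1, abs_of_pos hh0], hval.symm⟩
  · rintro _ ⟨x, hx0, hgap, rfl⟩
    exact div_le_natCast_sub_uFun hn hh0.le hx0 hgap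
  · set K := max C 1
    have hK : K ^ 2 < 2 + 2 * h + h ^ 2 := by
      have hsqrt : 1 < Real.sqrt (2 + 2 * h + h ^ 2) := by
        rw [Real.lt_sqrt zero_le_one]; nlinarith
      exact (Real.lt_sqrt (by positivity)).mp (max_lt hC hsqrt)
    have hKh : 0 ≤ K * h := by positivity
    obtain ⟨x, hx0, hx1, hval⟩ := exists_natCast_sub_uFun_eq hn hKh
    refine ⟨x, by simp [hx0], hval ▸ sq_div_lt_sq_of_sq_lt hh (le_max_right C 1) hK,
      1, le_rfl, hn, ?_⟩
    rw [hx0, hx1, abs_one, mul_one, add_sub_cancel_left, abs_of_nonneg hKh]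
    exact mul_le_mul_of_nonneg_right (le_max_left C 1) hh0.le

end
end

section
/- Let n ≥ 2, let x = (x_1,…,x_n) ∈ ℝⁿ with x_1 ≠ 0, and let h ∈ (0,1). If |x_i − x_1| < h·|x_1|/√(n−1) for every i = 2,…,n, then n − u_n(x) < h². -/
open MeasureTheory Filter

noncomputable section

open Finset

theorem sum_sq_lt_sq_of_abs_lt_div_sqrt_card {ι : Type*} {s : Finset ι} (hs : s.Nonempty)
    {f : ι → ℝ} {r : ℝ} (hf : ∀ i ∈ s, |f i| < r / √(#s : ℝ)) :
    ∑ i ∈ s, f i ^ 2 < r ^ 2 := by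
  have hcard : (0 : ℝ) < #s := by exact_mod_cast hs.card_pos
  calc ∑ i ∈ s, f i ^ 2 < ∑ _i ∈ s, (r / √(#s : ℝ)) ^ 2 := by
        refine sum_lt_sum_of_nonempty hs fun i hi => ?_
        rw [← sq_abs]
        exact pow_lt_pow_left₀ (hf i hi) (abs_nonneg _) two_ne_zero
    _ = r ^ 2 := by
        rw [sum_const, nsmul_eq_mul, div_pow, Real.sq_sqrt hcard.le]
        field_simp

/-- Centring the terms at `c` with `S = ∑ (f i - c)` and `Q = ∑ (f i - c)²`, the difference of
the two sides equals `(#s - h²) (Q - h² c²) - (S + h² c)²`. -/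
theorem card_mul_sum_sq_sub_sq_sum_lt {ι : Type*} (s : Finset ι) (f : ι → ℝ) {c h : ℝ}
    (hh : h ^ 2 < #s) (hQ : ∑ i ∈ s, (f i - c) ^ 2 < h ^ 2 * c ^ 2) :
    #s * ∑ i ∈ s, f i ^ 2 - (∑ i ∈ s, f i) ^ 2 < h ^ 2 * ∑ i ∈ s, f i ^ 2 := by
  have hsum : ∑ i ∈ s, f i = ∑ i ∈ s, (f i - c) + #s * c := by
    simp only [sum_sub_distrib, sum_const, nsmul_eq_mul]
    ring
  have hsum_sq : ∑ i ∈ s, f i ^ 2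
      = ∑ i ∈ s, (f i - c) ^ 2 + 2 * c * ∑ i ∈ s, (f i - c) + #s * c ^ 2 := by
    simp only [sub_sq, sum_add_distrib, sum_sub_distrib, ← mul_sum, ← sum_mul, sum_const,
      nsmul_eq_mul]
    ring
  rw [hsum, hsum_sq]
  nlinarith [sq_nonneg (∑ i ∈ s, (f i - c) + h ^ 2 * c),
    mul_pos (sub_pos.2 hh) (sub_pos.2 hQ)]

theorem u_close_of_abs_sub_lt_general (n : ℕ) (hn : 2 ≤ n) (x : ℕ → ℝ)
    (h : ℝ) (hh : h ∈ Set.Ioo (0 : ℝ) 1)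
    (hd : ∀ i, 1 ≤ i → i < n → |x i - x 0| < h * |x 0| / Real.sqrt ((n : ℝ) - 1)) :
    (n : ℝ) - uFun n x < h ^ 2 := by
  obtain ⟨hh0, hh1⟩ := hh
  have hQ : ∑ i ∈ range n, (x i - x 0) ^ 2 < h ^ 2 * x 0 ^ 2 := by
    rw [range_eq_Ico, sum_eq_sum_Ico_succ_bot (by omega), sub_self, zero_pow two_ne_zero,
      zero_add, ← sq_abs (x 0), ← mul_pow]
    refine sum_sq_lt_sq_of_abs_lt_div_sqrt_card (nonempty_Ico.2 (by omega)) fun i hi => ?_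
    rw [mem_Ico] at hi
    simpa [Nat.cast_sub (by omega : 1 ≤ n)] using hd i hi.1 hi.2
  have hx0 : 0 < x 0 ^ 2 := by
    nlinarith [sum_nonneg fun i (_ : i ∈ range n) => sq_nonneg (x i - x 0), sq_nonneg (x 0)]
  have hB : 0 < ∑ i ∈ range n, x i ^ 2 :=
    hx0.trans_le (single_le_sum (fun i _ => sq_nonneg (x i)) (mem_range.2 (by omega)))
  have hhn : h ^ 2 < #(range n) := by
    rw [card_range]
    have : (2 : ℝ) ≤ n := by exact_mod_cast hn
    nlinarith
  have key := card_mul_sum_sq_sub_sq_sum_lt (range n) x hhn hQ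
  rw [card_range] at key
  rw [uFun, sub_lt_comm, lt_div_iff₀ hB]
  linarith

/-- If `x_1 ≠ 0`, `h ∈ (0,1)` and `|x_i − x_1| < h·|x_1|/√(n−1)` for every `i = 2, …, n`,
then `n − u_n(x) < h²`. -/
theorem u_close_of_abs_sub_lt (n : ℕ) (hn : 2 ≤ n) (x : ℕ → ℝ) (hx0 : x 0 ≠ 0)
    (h : ℝ) (hh : h ∈ Set.Ioo (0 : ℝ) 1)
    (hd : ∀ i, 1 ≤ i → i < n → |x i - x 0| < h * |x 0| / Real.sqrt ((n : ℝ) - 1)) :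
    (n : ℝ) - uFun n x < h ^ 2 :=
  u_close_of_abs_sub_lt_general n hn x h hh hd

end
end

section
/- Let n ≥ 3 be odd, let h ∈ (0,1), and let C_2 > √(n/(n − h²)). Then there exists x = (x_1,…,x_n) ∈ ℝⁿ with x_1 ≠ 0 and |x_i − x_1| < C_2·h·|x_1|/√(n−1) for every i = 2,…,n, such that n − u_n(x) ≥ h². In other words, for odd n a constant C_2 in the implication '|x_i − x_1| < C_2 h |x_1|/√(n−1) for all i ≥ 2 implies n − u_n(x) < h²' must satisfy C_2 ≤ √(n/(n − h²)). -/
open MeasureTheory Filter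

noncomputable section

/-! For odd `n = 2k + 1` take `x = (1, 1 - t, 1 + t, …, 1 - t, 1 + t)`: the perturbations cancel,
so `∑ xᵢ = n` while `∑ xᵢ² = n + (n - 1) t²`. Choosing `t = h √(n/(n - h²)) / √(n - 1)` makes
`n - u_n(x) = h²` exactly, and `|xᵢ - x₁| = t` is below `C₂ h / √(n - 1)` as soon as
`C₂ > √(n/(n - h²))`. -/

open Finset

def altSign (i : ℕ) : ℝ := if i = 0 then 0 else (-1) ^ i

lemma altSign_zero : altSign 0 = 0 := if_pos rfl

lemma abs_altSign {i : ℕ} (hi : i ≠ 0) : |altSign i| = 1 := by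
  simp [altSign, hi]

lemma sum_range_altSign_odd (k : ℕ) : ∑ i ∈ range (2 * k + 1), altSign i = 0 := by
  induction k with
  | zero => simp [altSign]
  | succ k ih =>
    rw [show 2 * (k + 1) + 1 = 2 * k + 1 + 1 + 1 by ring, sum_range_succ, sum_range_succ, ih]
    simp [altSign, pow_succ]

lemma sum_range_altSign_sq (n : ℕ) : ∑ i ∈ range (n + 1), altSign i ^ 2 = n := by
  have h : ∀ i, altSign (i + 1) ^ 2 = 1 := fun i ↦ by
    rw [altSign, if_neg i.succ_ne_zero, ← pow_mul, mul_comm, pow_mul, neg_one_sq, one_pow]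
  simp only [sum_range_succ', h]
  simp [altSign]

lemma uFun_one_add_mul {n : ℕ} {ε : ℕ → ℝ} (hε : ∑ i ∈ range n, ε i = 0) (t : ℝ) :
    uFun n (fun i ↦ 1 + t * ε i) = n ^ 2 / (n + t ^ 2 * ∑ i ∈ range n, ε i ^ 2) := by
  have hsq : ∀ i, (1 + t * ε i) ^ 2 = 1 + 2 * t * ε i + t ^ 2 * ε i ^ 2 := fun i ↦ by ring
  simp only [uFun, hsq, sum_add_distrib, ← mul_sum, hε]
  simp

lemma sub_sq_div_add_mul_div_sub {a b : ℝ} (ha : a ≠ 0) (hab : a - b ≠ 0) :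
    a - a ^ 2 / (a + b * a / (a - b)) = b := by
  have : a + b * a / (a - b) = a ^ 2 / (a - b) := by field_simp; ring
  rw [this, div_div_eq_mul_div]
  field_simp
  ring

/-- For odd `n ≥ 3`, `h ∈ (0,1)` and any `C₂ > √(n/(n − h²))`, there is a vector `x` with
`x_1 ≠ 0` and `|x_i − x_1| < C₂·h·|x_1|/√(n−1)` for all `i = 2, …, n`, yet
`n − u_n(x) ≥ h²`; i.e. for odd `n` the constant `C₂` in the implication
"`|x_i − x_1| < C₂·h·|x_1|/√(n−1)` for all `i ≥ 2` implies `n − u_n(x) < h²`"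
must satisfy `C₂ ≤ √(n/(n − h²))`. -/
theorem exists_u_far_of_large_const (n : ℕ) (hn : 3 ≤ n) (hodd : Odd n)
    (h : ℝ) (hh : h ∈ Set.Ioo (0 : ℝ) 1)
    (C₂ : ℝ) (hC : Real.sqrt ((n : ℝ) / ((n : ℝ) - h ^ 2)) < C₂) :
    ∃ x : ℕ → ℝ, x 0 ≠ 0 ∧
      (∀ i, 1 ≤ i → i < n → |x i - x 0| < C₂ * h * |x 0| / Real.sqrt ((n : ℝ) - 1)) ∧
      h ^ 2 ≤ (n : ℝ) - uFun n x := by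
  obtain ⟨hh0, hh1⟩ := hh
  obtain ⟨k, rfl⟩ := hodd
  set N : ℝ := ((2 * k + 1 : ℕ) : ℝ)
  have hN : (2 * k : ℕ) = N - 1 := by simp only [N]; push_cast; ring
  have hN3 : 3 ≤ N := by simp only [N]; exact_mod_cast hn
  have hNh : 0 < N - h ^ 2 := by nlinarith
  have hr : 0 < √(N - 1) := Real.sqrt_pos.2 (by linarith)
  set t := h * √(N / (N - h ^ 2)) / √(N - 1)
  have ht : 0 < t := by positivity
  have ht2 : t ^ 2 * (N - 1) = h ^ 2 * N / (N - h ^ 2) := by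
    have : N - 1 ≠ 0 := by linarith
    simp only [t, div_pow, mul_pow]
    rw [Real.sq_sqrt (by positivity), Real.sq_sqrt (by linarith)]
    field_simp
  refine ⟨fun i ↦ 1 + t * altSign i, by simp [altSign_zero], fun i hi _ ↦ ?_, ?_⟩
  · simp only [altSign_zero, mul_zero, add_zero, add_sub_cancel_left, abs_one, mul_one, abs_mul,
      abs_altSign (show i ≠ 0 by omega), abs_of_pos ht, t]
    rw [mul_comm C₂]
    gcongr
  · rw [uFun_one_add_mul (sum_range_altSign_odd k), sum_range_altSign_sq, hN, ht2,
      sub_sq_div_add_mul_div_sub (by positivity) hNh.ne']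

end
end

section
/- Let (X_i)_{i≥1} be i.i.d. real-valued random variables, let r > 0 and n ≥ 2, and for k ≥ 2 let A_k be the event that |X_i − X_1| > 0 for some 2 ≤ i ≤ k. Then E(|X_1|^r · min_{2≤i≤n+1} |X_i − X_1|^{−r} · 1_{A_{n+1}}) ≤ 2 · E(|X_1|^r · min_{2≤i≤n} |X_i − X_1|^{−r} · 1_{A_n}). -/
open MeasureTheory ProbabilityTheory Filter

noncomputable section

/-!
Let `F_k` be the integrand on the side with index bound `k`. On `A_n` the extra index only
lowers the minimum, and on `A_{n+1} \ A_n` the variable `X_{n+1}` is the first one to differ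
from `X_1`, so `F_{n+1} ≤ F_n + G`, where `G = |X_1|^r |X_{n+1} - X_1|^{-r}` on the event
`X_2 = ⋯ = X_n = X_1 ≠ X_{n+1}`. Exchanging `X_n` and `X_{n+1}` preserves the joint law of an
i.i.d. sequence, and after the exchange `G ≤ F_n` pointwise: the minimum defining `F_n` is
attained at `i = n`, since every other term is `0^{-r} = ∞`. Hence `E F_{n+1} ≤ 2 E F_n`.
-/

open scoped ENNReal

theorem ProbabilityTheory.iIndepFun.identDistrib_precomp {Ω ι β : Type*} [MeasurableSpace Ω]
    {P : Measure Ω} [IsProbabilityMeasure P] [MeasurableSpace β] {X : ι → Ω → β}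
    (hindep : iIndepFun X P) (hmeas : ∀ i, Measurable (X i)) {g : ι → ι}
    (hg : g.Injective) (hident : ∀ i, IdentDistrib (X (g i)) (X i) P P) :
    IdentDistrib (fun ω i ↦ X (g i) ω) (fun ω i ↦ X i ω) P P where
  aemeasurable_fst := (measurable_pi_lambda _ fun i ↦ hmeas (g i)).aemeasurable
  aemeasurable_snd := (measurable_pi_lambda _ hmeas).aemeasurable
  map_eq := by
    rw [(hindep.precomp hg).map_fun_eq_infinitePi_map (fun i ↦ hmeas (g i)),
      hindep.map_fun_eq_infinitePi_map hmeas]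
    simp_rw [(hident _).map_eq]

/-- The integrand of the theorem with bound `k`, evaluated at the sample `x`; the paper's `X_1` is
`x 0`, so `Finset.Ico 1 k` indexes the paper's `2, …, k`. -/
def minInvDistTerm (r : ℝ) (k : ℕ) (x : ℕ → ℝ) : ℝ≥0∞ :=
  {y : ℕ → ℝ | ∃ i ∈ Finset.Ico 1 k, y i ≠ y 0}.indicator
    (fun y ↦ ENNReal.ofReal (|y 0| ^ r) *
      ⨅ i ∈ Finset.Ico 1 k, (ENNReal.ofReal |y i - y 0|) ^ (-r)) x

def firstDistinctTerm (r : ℝ) (m : ℕ) (x : ℕ → ℝ) : ℝ≥0∞ :=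
  {y : ℕ → ℝ | (∀ i ∈ Finset.Ico 1 m, y i = y 0) ∧ y m ≠ y 0}.indicator
    (fun y ↦ ENNReal.ofReal (|y 0| ^ r) * (ENNReal.ofReal |y m - y 0|) ^ (-r)) x

theorem measurable_firstDistinctTerm (r : ℝ) (m : ℕ) : Measurable (firstDistinctTerm r m) :=
  Measurable.indicator (by fun_prop) (by measurability)

theorem minInvDistTerm_succ_le (r : ℝ) (m : ℕ) (x : ℕ → ℝ) :
    minInvDistTerm r (m + 1) x ≤ minInvDistTerm r m x + firstDistinctTerm r m x := by
  simp only [minInvDistTerm, firstDistinctTerm, Set.indicator_apply, Set.mem_ofPred_eq]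
  by_cases hm : ∃ i ∈ Finset.Ico 1 m, x i ≠ x 0
  · have hsucc : ∃ i ∈ Finset.Ico 1 (m + 1), x i ≠ x 0 :=
      hm.imp fun i ⟨hi, hne⟩ ↦ ⟨Finset.Ico_subset_Ico_right m.le_succ hi, hne⟩
    rw [if_pos hsucc, if_pos hm]
    exact le_add_right <| mul_le_mul_right
      (biInf_mono fun i hi ↦ Finset.Ico_subset_Ico_right m.le_succ hi) _
  · by_cases hsucc : ∃ i ∈ Finset.Ico 1 (m + 1), x i ≠ x 0
    · rw [if_neg hm, zero_add]
      push Not at hm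
      obtain ⟨i, hi, hne⟩ := hsucc
      obtain rfl : i = m := by
        by_contra him
        exact hne (hm i (Finset.mem_Ico.2 ⟨(Finset.mem_Ico.1 hi).1, by grind⟩))
      rw [if_pos ⟨i, hi, hne⟩, if_pos ⟨hm, hne⟩]
      exact mul_le_mul_right (iInf₂_le i hi) _
    · rw [if_neg hsucc]
      exact zero_le

theorem firstDistinctTerm_comp_swap_le {r : ℝ} (hr : 0 < r) {m : ℕ} (hm : 2 ≤ m)
    (x : ℕ → ℝ) : firstDistinctTerm r m (x ∘ Equiv.swap (m - 1) m) ≤ minInvDistTerm r m x := by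
  have hswap0 : Equiv.swap (m - 1) m 0 = 0 := Equiv.swap_apply_of_ne_of_ne (by omega) (by omega)
  simp only [minInvDistTerm, firstDistinctTerm, Set.indicator_apply, Set.mem_ofPred_eq,
    Function.comp_apply, hswap0, Equiv.swap_apply_right]
  by_cases hfirst : (∀ i ∈ Finset.Ico 1 m, x (Equiv.swap (m - 1) m i) = x 0) ∧ x (m - 1) ≠ x 0
  · obtain ⟨hfix, hne⟩ := hfirst
    rw [if_pos ⟨hfix, hne⟩, if_pos ⟨m - 1, Finset.mem_Ico.2 ⟨by omega, by omega⟩, hne⟩]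
    refine mul_le_mul_right (le_iInf₂ fun i hi ↦ ?_) _
    rcases eq_or_ne i (m - 1) with rfl | hi'
    · rfl
    · have hxi := hfix i hi
      rw [Equiv.swap_apply_of_ne_of_ne hi' (Finset.mem_Ico.1 hi).2.ne] at hxi
      rw [hxi, sub_self, abs_zero, ENNReal.ofReal_zero,
        ENNReal.zero_rpow_of_neg (neg_neg_of_pos hr)]
      exact le_top
  · rw [if_neg hfirst]
    exact zero_le

/-- For i.i.d. `X_i`, `r > 0` and `n ≥ 2`, with `A_k = {|X_i − X_1| > 0 for some 2 ≤ i ≤ k}`: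
`E(|X_1|^r · min_{2≤i≤n+1} |X_i − X_1|^{−r} · 1_{A_{n+1}})
  ≤ 2 · E(|X_1|^r · min_{2≤i≤n} |X_i − X_1|^{−r} · 1_{A_n})`. -/
theorem expectation_min_succ_le_two_mul {Ω : Type*} [MeasurableSpace Ω]
    (P : Measure Ω) [IsProbabilityMeasure P]
    (X : ℕ → Ω → ℝ) (hmeas : ∀ i, Measurable (X i))
    (hindep : iIndepFun X P)
    (hident : ∀ i, IdentDistrib (X i) (X 0) P P)
    (n : ℕ) (hn : 2 ≤ n) (r : ℝ) (hr : 0 < r) :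
    (∫⁻ ω, Set.indicator {ω | ∃ i ∈ Finset.Ico 1 (n + 1), X i ω ≠ X 0 ω}
        (fun ω => ENNReal.ofReal (|X 0 ω| ^ r) *
          ⨅ i ∈ Finset.Ico 1 (n + 1), (ENNReal.ofReal |X i ω - X 0 ω|) ^ (-r)) ω ∂P) ≤
      2 * ∫⁻ ω, Set.indicator {ω | ∃ i ∈ Finset.Ico 1 n, X i ω ≠ X 0 ω}
        (fun ω => ENNReal.ofReal (|X 0 ω| ^ r) *
          ⨅ i ∈ Finset.Ico 1 n, (ENNReal.ofReal |X i ω - X 0 ω|) ^ (-r)) ω ∂P := by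
  set σ := Equiv.swap (n - 1) n
  have hexchange : ∫⁻ ω, firstDistinctTerm r n (fun i ↦ X (σ i) ω) ∂P
      = ∫⁻ ω, firstDistinctTerm r n (fun i ↦ X i ω) ∂P :=
    ((hindep.identDistrib_precomp hmeas σ.injective fun i ↦ (hident _).trans (hident i).symm).comp
      (measurable_firstDistinctTerm r n)).lintegral_eq
  have hmeasG : Measurable fun ω ↦ firstDistinctTerm r n (fun i ↦ X i ω) :=
    (measurable_firstDistinctTerm r n).comp (measurable_pi_lambda _ hmeas)
  calc ∫⁻ ω, minInvDistTerm r (n + 1) (fun i ↦ X i ω) ∂P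
      ≤ ∫⁻ ω, minInvDistTerm r n (fun i ↦ X i ω) + firstDistinctTerm r n (fun i ↦ X i ω) ∂P :=
        lintegral_mono fun ω ↦ minInvDistTerm_succ_le r n _
    _ = ∫⁻ ω, minInvDistTerm r n (fun i ↦ X i ω) ∂P
          + ∫⁻ ω, firstDistinctTerm r n (fun i ↦ X (σ i) ω) ∂P := by
        rw [lintegral_add_right _ hmeasG, hexchange]
    _ ≤ ∫⁻ ω, minInvDistTerm r n (fun i ↦ X i ω) ∂P
          + ∫⁻ ω, minInvDistTerm r n (fun i ↦ X i ω) ∂P := by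
        gcongr with ω
        exact firstDistinctTerm_comp_swap_le hr hn _
    _ = 2 * ∫⁻ ω, minInvDistTerm r n (fun i ↦ X i ω) ∂P := (two_mul _).symm
end
end

section
/- Assume the common distribution F of the X_i decomposes as F = F_d + F_c with F_d a discrete measure and F_c a continuous (atomless) measure, and assume F_c is not identically zero. Then for every n ≥ 2 and every r ≥ n − 1, E|T_n|^r = ∞; that is, r < n − 1 is necessary for finiteness of E|T_n|^r. -/
open MeasureTheory ProbabilityTheory Filter

noncomputable section

/-! If `X_0, …, X_{n-1}` all fall into one interval of length `δ` on which `|x| ≥ L`, and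
`X_0 ≠ X_1`, then `0 < σ̂_n ≤ √2 δ` while the mean lies in the same interval, so `|T_n| ≥ L / δ`.
Take an interval `J` on which `|x|` is at least the length of `J` and with `β = F_c(J) > 0`, and
cut it into `m` equal pieces `J_j`. By independence, and since `F_c` has no atoms (so that
`X_0 ≠ X_1` costs nothing), `P(|T_n| ≥ m) ≥ ∑_j F_c(J_j)^n ≥ β^n / m^(n-1)` by the power mean
inequality. A tail of order `t^(-(n-1))` forces `E|T_n|^r = ∞` for `r ≥ n - 1`. -/

open Set

section Deterministic

variable {Ω : Type*} {X : ℕ → Ω → ℝ} {n : ℕ} {ω : Ω}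

lemma sn_div_mem {s : Set ℝ} (hs : Convex ℝ s) (hn : 0 < n) (hmem : ∀ i < n, X i ω ∈ s) :
    Sn X n ω / n ∈ s := by
  have hw : ∑ _i ∈ Finset.range n, (n : ℝ)⁻¹ = 1 := by
    rw [Finset.sum_const, Finset.card_range, nsmul_eq_mul, mul_inv_cancel₀ (by positivity)]
  have := hs.sum_mem (fun _ _ => by positivity) hw fun i hi =>
    hmem i (Finset.mem_range.mp hi)
  rwa [← Finset.smul_sum, smul_eq_mul, inv_mul_eq_div] at this

lemma sigmaSq_pos (hn : 2 ≤ n) (hne : X 0 ω ≠ X 1 ω) : 0 < sigmaSq X n ω := by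
  have hsum : 0 < ∑ i ∈ Finset.range n, (X i ω - Sn X n ω / n) ^ 2 := by
    refine Finset.sum_pos' (fun i _ => sq_nonneg _) ?_
    by_contra! h
    have hzero : ∀ i < n, X i ω = Sn X n ω / n := fun i hi =>
      sub_eq_zero.mp (pow_eq_zero_iff two_ne_zero |>.mp
        (le_antisymm (h i (Finset.mem_range.mpr hi)) (sq_nonneg _)))
    exact hne ((hzero 0 (by omega)).trans (hzero 1 (by omega)).symm)
  have hn1 : (0 : ℝ) < n - 1 := by
    have : (2 : ℝ) ≤ n := by exact_mod_cast hn
    linarith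
  exact mul_pos (by positivity) hsum

lemma sigmaSq_le {a δ : ℝ} (hn : 2 ≤ n) (hmem : ∀ i < n, X i ω ∈ Ico a (a + δ)) :
    sigmaSq X n ω ≤ 2 * δ ^ 2 := by
  have hmean := sn_div_mem (convex_Ico a (a + δ)) (by omega) hmem
  have hterm : ∀ i ∈ Finset.range n, (X i ω - Sn X n ω / n) ^ 2 ≤ δ ^ 2 := fun i hi => by
    have hi := hmem i (Finset.mem_range.mp hi)
    rw [Set.mem_Ico] at hi hmean
    nlinarith
  have hsum := Finset.sum_le_sum hterm
  rw [Finset.sum_const, Finset.card_range, nsmul_eq_mul] at hsum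
  have h2n : (2 : ℝ) ≤ n := by exact_mod_cast hn
  rw [sigmaSq, one_div, inv_mul_le_iff₀ (by linarith)]
  nlinarith [sq_nonneg δ]

lemma abs_sn_div_div_le_abs_tstat {a δ : ℝ} (hn : 2 ≤ n) (hδ : 0 < δ)
    (hmem : ∀ i < n, X i ω ∈ Ico a (a + δ)) (hne : X 0 ω ≠ X 1 ω) :
    |Sn X n ω / n| / δ ≤ |Tstat X n ω| := by
  have hσ := sigmaSq_pos hn hne
  have h2n : (2 : ℝ) ≤ n := by exact_mod_cast hn
  have hden : √n * √(sigmaSq X n ω) ≤ n * δ := by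
    calc √n * √(sigmaSq X n ω) ≤ √n * √(2 * δ ^ 2) := by gcongr; exact sigmaSq_le hn hmem
      _ = √(2 * n) * δ := by
        rw [Real.sqrt_mul zero_le_two, Real.sqrt_sq hδ.le, Real.sqrt_mul zero_le_two]; ring
      _ ≤ √(n ^ 2) * δ := by gcongr; nlinarith
      _ = n * δ := by rw [Real.sqrt_sq (by positivity)]
  have hpos : 0 < √n * √(sigmaSq X n ω) := by positivity
  rw [Tstat, if_pos hσ, abs_div, abs_div, abs_of_pos hpos, Nat.abs_cast, div_div]
  exact div_le_div_of_nonneg_left (abs_nonneg _) hpos hden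

lemma le_abs_tstat_of_mem_Ico {a b c δ : ℝ} (habs : ∀ x ∈ Ico a b, b - a ≤ |x|) (hn : 2 ≤ n)
    (hδ : 0 < δ) (hsub : Ico c (c + δ) ⊆ Ico a b) (hmem : ∀ i < n, X i ω ∈ Ico c (c + δ))
    (hne : X 0 ω ≠ X 1 ω) : (b - a) / δ ≤ |Tstat X n ω| :=
  (div_le_div_of_nonneg_right (habs _ (hsub (sn_div_mem (convex_Ico _ _) (by omega) hmem)))
    hδ.le).trans (abs_sn_div_div_le_abs_tstat hn hδ hmem hne)

end Deterministic

lemma exists_Ico_pos_measure_sub_le_abs {μ : Measure ℝ} (h0 : μ {0} = 0) (hμ : μ ≠ 0) :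
    ∃ a b, a < b ∧ (∀ x ∈ Ico a b, b - a ≤ |x|) ∧ 0 < μ (Ico a b) := by
  -- `J q` is `[q, 2q)` or `[2q, q)`: its length `|q|` is at most `|x|` for `x ∈ J q`.
  set J : ℚ → Set ℝ := fun q => Ico (min (q : ℝ) (2 * q)) (max (q : ℝ) (2 * q))
  have hcover : {0}ᶜ ⊆ ⋃ q, J q := by
    intro x hx
    rcases (mem_compl_singleton_iff.mp hx).lt_or_gt with hneg | hpos
    · obtain ⟨q, hxq, hqx⟩ := exists_rat_btwn (show x < x / 2 by linarith)
      exact mem_iUnion.mpr ⟨q, by simp only [J, mem_Ico]; constructor <;> grind⟩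
    · obtain ⟨q, hxq, hqx⟩ := exists_rat_btwn (show x / 2 < x by linarith)
      exact mem_iUnion.mpr ⟨q, by simp only [J, mem_Ico]; constructor <;> grind⟩
  obtain ⟨q, hq⟩ : ∃ q, μ (J q) ≠ 0 := by
    by_contra! h
    refine hμ (Measure.measure_univ_eq_zero.mp (measure_mono_null ?_
      (measure_union_null (measure_iUnion_null h) h0)))
    rw [← compl_union_self {(0 : ℝ)}]
    exact union_subset_union_left _ hcover
  refine ⟨_, _, nonempty_Ico.mp (nonempty_of_measure_ne_zero hq), fun x hx => ?_,
    pos_iff_ne_zero.mpr hq⟩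
  simp only [mem_Ico] at hx
  rcases le_or_gt (q : ℝ) 0 with hq0 | hq0
  · rw [min_eq_right (by linarith), max_eq_left (by linarith)] at hx ⊢
    rw [abs_of_neg (by linarith)]; linarith
  · rw [min_eq_left (by linarith), max_eq_right (by linarith)] at hx ⊢
    rw [abs_of_pos (by linarith)]; linarith

lemma measure_Ico_add_mul_eq_sum (μ : Measure ℝ) (a δ : ℝ) (hδ : 0 ≤ δ) (m : ℕ) :
    μ (Ico a (a + m * δ)) = ∑ j ∈ Finset.range m, μ (Ico (a + j * δ) (a + j * δ + δ)) := by
  induction m with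
  | zero => simp
  | succ m ih =>
    rw [Nat.cast_succ, add_one_mul, ← add_assoc, Finset.sum_range_succ, ← ih,
      ← measure_union Ico_disjoint_Ico_same measurableSet_Ico,
      Ico_union_Ico_eq_Ico (le_add_of_nonneg_right (by positivity)) (by linarith)]

lemma pairwise_disjoint_Ico_add_mul (a δ : ℝ) :
    Pairwise (Function.onFun Disjoint fun j : ℕ => Ico (a + j * δ) (a + j * δ + δ)) := by
  intro j k hjk
  simpa [Function.onFun, add_mul, add_assoc] using
    pairwise_disjoint_Ico_add_zsmul a δ (Nat.cast_injective.ne hjk : (j : ℤ) ≠ k)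

lemma ofReal_measureReal_Ico_pow_div_le_sum_pow (μ : Measure ℝ) [IsFiniteMeasure μ] (a δ : ℝ)
    (hδ : 0 ≤ δ) (m k : ℕ) :
    ENNReal.ofReal (μ.real (Ico a (a + m * δ)) ^ (k + 1) / m ^ k) ≤
      ∑ j ∈ Finset.range m, μ (Ico (a + j * δ) (a + j * δ + δ)) ^ (k + 1) := by
  have hsum : μ.real (Ico a (a + m * δ)) =
      ∑ j ∈ Finset.range m, μ.real (Ico (a + j * δ) (a + j * δ + δ)) := by
    rw [measureReal_def, measure_Ico_add_mul_eq_sum μ a δ hδ m,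
      ENNReal.toReal_sum fun _ _ => measure_ne_top _ _]
    rfl
  have hmean := pow_sum_div_card_le_sum_pow (s := Finset.range m)
    (f := fun j : ℕ => μ.real (Ico (a + j * δ) (a + j * δ + δ)))
    (fun _ _ => measureReal_nonneg) k
  rw [Finset.card_range, ← hsum] at hmean
  refine (ENNReal.ofReal_le_ofReal hmean).trans_eq ?_
  rw [ENNReal.ofReal_sum_of_nonneg fun _ _ => by positivity]
  exact Finset.sum_congr rfl fun j _ => by
    rw [ENNReal.ofReal_pow measureReal_nonneg, ofReal_measureReal]

lemma MeasureTheory.Measure.prod_diagonal_eq_zero {α : Type*} [MeasurableSpace α] [MeasurableEq α]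
    (μ ν : Measure α) [SFinite ν] [NullSingletonClass ν] : μ.prod ν (diagonal α) = 0 := by
  rw [Measure.prod_apply measurableSet_diagonal]
  simp [diagonal, preimage]

lemma pow_two_le_prod_diff_diagonal {α : Type*} [MeasurableSpace α] [MeasurableEq α]
    {μ ν : Measure α} [SFinite μ] [SFinite ν] [NullSingletonClass μ] (hle : μ ≤ ν)
    (s : Set α) :
    μ s ^ 2 ≤ ν.prod ν (s ×ˢ s \ diagonal α) :=
  calc μ s ^ 2 = μ.prod μ (s ×ˢ s \ diagonal α) := by
        rw [measure_sdiff_null (Measure.prod_diagonal_eq_zero μ μ), Measure.prod_prod, sq]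
    _ ≤ ν.prod ν (s ×ˢ s \ diagonal α) := Measure.prod_mono hle hle _

lemma lintegral_Ioi_one_ofReal_mul_rpow_eq_top {C p : ℝ} (hC : 0 < C) (hp : -1 ≤ p) :
    ∫⁻ t in Ioi 1, ENNReal.ofReal (C * t ^ p) = ⊤ := by
  by_contra h
  have hint : IntegrableOn (fun t : ℝ => C * t ^ p) (Ioi 1) :=
    (lintegral_ofReal_ne_top_iff_integrable (by fun_prop) (ae_restrict_of_forall_mem
      measurableSet_Ioi fun t (ht : 1 < t) => by
        have : 0 < t := zero_lt_one.trans ht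
        positivity)).mp h
  have := (integrableOn_Ioi_rpow_iff zero_lt_one).mp <| by
    simpa [IntegrableOn, ← mul_assoc, inv_mul_cancel₀ hC.ne'] using hint.const_mul C⁻¹
  linarith

section Tail

variable {α : Type*} [MeasurableSpace α] {μ : Measure α} {f : α → ℝ}

lemma lintegral_rpow_eq_top_of_tail (hf_nn : 0 ≤ᵐ[μ] f) (hf : AEMeasurable f μ) {C q r : ℝ}
    (hC : 0 < C) (hr : 0 < r) (hqr : q ≤ r)
    (htail : ∀ t, 1 < t → ENNReal.ofReal (C * t ^ (-q)) ≤ μ {a | t ≤ f a}) :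
    ∫⁻ a, ENNReal.ofReal (f a ^ r) ∂μ = ⊤ := by
  rw [lintegral_rpow_eq_lintegral_meas_le_mul μ hf_nn hf hr, ENNReal.mul_eq_top]
  refine Or.inl ⟨ENNReal.ofReal_pos.mpr hr |>.ne', eq_top_iff.mpr ?_⟩
  calc ⊤ = ∫⁻ t in Ioi 1, ENNReal.ofReal (C * t ^ (r - 1 - q)) :=
        (lintegral_Ioi_one_ofReal_mul_rpow_eq_top hC (by linarith)).symm
    _ ≤ ∫⁻ t in Ioi 1, μ {a | t ≤ f a} * ENNReal.ofReal (t ^ (r - 1)) := by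
        refine setLIntegral_mono' measurableSet_Ioi fun t (ht : 1 < t) => ?_
        have ht0 : 0 < t := zero_lt_one.trans ht
        calc ENNReal.ofReal (C * t ^ (r - 1 - q))
            = ENNReal.ofReal (C * t ^ (-q)) * ENNReal.ofReal (t ^ (r - 1)) := by
              rw [← ENNReal.ofReal_mul (by positivity), mul_assoc, ← Real.rpow_add ht0]
              ring_nf
          _ ≤ _ := by gcongr; exact htail t ht
    _ ≤ ∫⁻ t in Ioi 0, μ {a | t ≤ f a} * ENNReal.ofReal (t ^ (r - 1)) :=
        lintegral_mono_set (Ioi_subset_Ioi zero_le_one)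

lemma lintegral_rpow_eq_top_of_tail_nat (hf_nn : 0 ≤ᵐ[μ] f) (hf : AEMeasurable f μ) {K r : ℝ}
    {k : ℕ} (hK : 0 < K) (hr : 0 < r) (hkr : k ≤ r)
    (htail : ∀ m : ℕ, 0 < m → ENNReal.ofReal (K / m ^ k) ≤ μ {a | m ≤ f a}) :
    ∫⁻ a, ENNReal.ofReal (f a ^ r) ∂μ = ⊤ := by
  refine lintegral_rpow_eq_top_of_tail hf_nn hf (C := K / 2 ^ k) (by positivity) hr hkr
    fun t ht => ?_
  have ht0 : 0 < t := zero_lt_one.trans ht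
  have hceil : (⌈t⌉₊ : ℝ) ≤ 2 * t := by linarith [Nat.ceil_lt_add_one ht0.le]
  calc ENNReal.ofReal (K / 2 ^ k * t ^ (-(k : ℝ))) = ENNReal.ofReal (K / (2 * t) ^ k) := by
        rw [Real.rpow_neg ht0.le, Real.rpow_natCast, mul_pow, ← div_div, div_eq_mul_inv (K / _)]
    _ ≤ ENNReal.ofReal (K / ⌈t⌉₊ ^ k) := by
        gcongr
    _ ≤ μ {a | (⌈t⌉₊ : ℝ) ≤ f a} := htail _ (Nat.ceil_pos.mpr ht0)
    _ ≤ μ {a | t ≤ f a} := measure_mono fun a (ha : _ ≤ f a) => (Nat.le_ceil t).trans ha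

end Tail

section Sample

variable {Ω : Type*} [MeasurableSpace Ω] {P : Measure Ω} {X : ℕ → Ω → ℝ} {F Fc : Measure ℝ}

lemma measurable_tstat (hmeas : ∀ i, Measurable (X i)) (n : ℕ) : Measurable (Tstat X n) := by
  have hS : Measurable (Sn X n) := Finset.measurable_sum _ fun i _ => hmeas i
  have hσ : Measurable (sigmaSq X n) :=
    (Finset.measurable_sum _ fun i _ => ((hmeas i).sub (hS.div_const _)).pow_const 2).const_mul _
  exact Measurable.ite (measurableSet_lt measurable_const hσ)
    (hS.div (measurable_const.mul hσ.sqrt)) measurable_const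

lemma measure_biInter_preimage_eq_pow (hmeas : ∀ i, Measurable (X i)) (hindep : iIndepFun X P)
    (hdist : ∀ i, P.map (X i) = F) (S : Finset ℕ) {I : Set ℝ} (hI : MeasurableSet I) :
    P (⋂ i ∈ S, X i ⁻¹' I) = F I ^ S.card := by
  rw [hindep.measure_inter_preimage_eq_mul S (sets := fun _ => I) (fun _ _ => hI),
    Finset.prod_congr rfl fun i _ => (hdist i ▸ Measure.map_apply (hmeas i) hI).symm,
    Finset.prod_const]

variable [IsProbabilityMeasure P]

lemma map_pair_eq_prod (hmeas : ∀ i, Measurable (X i)) (hindep : iIndepFun X P)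
    (hdist : ∀ i, P.map (X i) = F) {i j : ℕ} (hij : i ≠ j) :
    P.map (fun ω => (X i ω, X j ω)) = F.prod F := by
  rw [(indepFun_iff_map_prod_eq_prod_map_map (hmeas i).aemeasurable
    (hmeas j).aemeasurable).mp (hindep.indepFun hij), hdist, hdist]

lemma pow_le_measure_forall_mem_and_ne (hmeas : ∀ i, Measurable (X i))
    (hindep : iIndepFun X P) (hdist : ∀ i, P.map (X i) = F) (hle : Fc ≤ F)
    [IsFiniteMeasure Fc] [NullSingletonClass Fc] {n : ℕ} (hn : 2 ≤ n) {I : Set ℝ}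
    (hI : MeasurableSet I) :
    Fc I ^ n ≤ P {ω | (∀ i < n, X i ω ∈ I) ∧ X 0 ω ≠ X 1 ω} := by
  have : IsProbabilityMeasure F :=
    hdist 0 ▸ Measure.isProbabilityMeasure_map (hmeas 0).aemeasurable
  set pair : Ω → ℝ × ℝ := fun ω => (X 0 ω, X 1 ω)
  set rest : Ω → Finset.Ico 2 n → ℝ := fun ω i => X i ω
  have hs : MeasurableSet (I ×ˢ I \ diagonal ℝ) := (hI.prod hI).diff measurableSet_diagonal
  have hpair : Fc I ^ 2 ≤ P (pair ⁻¹' (I ×ˢ I \ diagonal ℝ)) := by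
    rw [← Measure.map_apply ((hmeas 0).prodMk (hmeas 1)) hs,
      map_pair_eq_prod hmeas hindep hdist zero_ne_one]
    exact pow_two_le_prod_diff_diagonal hle I
  have hrest : Fc I ^ (n - 2) ≤ P (rest ⁻¹' univ.pi fun _ => I) := by
    have hB : rest ⁻¹' univ.pi (fun _ => I) = ⋂ i ∈ Finset.Ico 2 n, X i ⁻¹' I := by
      ext ω; simp [rest]
    rw [hB, measure_biInter_preimage_eq_pow hmeas hindep hdist _ hI, Nat.card_Ico]
    exact pow_le_pow_left' (hle I) _
  have hindep' : IndepFun pair rest P := by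
    have hdisj : Disjoint ({0, 1} : Finset ℕ) (Finset.Ico 2 n) := by
      simp [Finset.disjoint_left]
    have hφ : Measurable fun v : ({0, 1} : Finset ℕ) → ℝ => (v ⟨0, by simp⟩, v ⟨1, by simp⟩) :=
      by fun_prop
    exact (hindep.indepFun_finset _ _ hdisj hmeas).comp hφ measurable_id
  have hsub : pair ⁻¹' (I ×ˢ I \ diagonal ℝ) ∩ rest ⁻¹' univ.pi (fun _ => I) ⊆
      {ω | (∀ i < n, X i ω ∈ I) ∧ X 0 ω ≠ X 1 ω} := by
    rintro ω ⟨⟨⟨h0, h1⟩, hne⟩, hrest⟩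
    refine ⟨fun i hi => ?_, hne⟩
    rcases Nat.lt_or_ge i 2 with hi2 | hi2
    · interval_cases i
      exacts [h0, h1]
    · exact hrest ⟨i, Finset.mem_Ico.mpr ⟨hi2, hi⟩⟩ (mem_univ _)
  calc Fc I ^ n = Fc I ^ 2 * Fc I ^ (n - 2) := by rw [← pow_add, Nat.add_sub_cancel' hn]
    _ ≤ P (pair ⁻¹' _) * P (rest ⁻¹' _) := mul_le_mul' hpair hrest
    _ = P (pair ⁻¹' _ ∩ rest ⁻¹' _) :=
      (hindep'.measure_inter_preimage_eq_mul _ _ hs (MeasurableSet.univ_pi fun _ => hI)).symm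
    _ ≤ _ := measure_mono hsub

lemma ofReal_div_pow_le_measure_le_abs_tstat (hmeas : ∀ i, Measurable (X i))
    (hindep : iIndepFun X P) (hdist : ∀ i, P.map (X i) = F) (hle : Fc ≤ F)
    [IsFiniteMeasure Fc] [NullSingletonClass Fc] {n : ℕ} (hn : 2 ≤ n) {a b : ℝ} (hab : a < b)
    (habs : ∀ x ∈ Ico a b, b - a ≤ |x|) {m : ℕ} (hm : 0 < m) :
    ENNReal.ofReal (Fc.real (Ico a b) ^ n / m ^ (n - 1)) ≤
      P {ω | (m : ℝ) ≤ |Tstat X n ω|} := by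
  set δ := (b - a) / m
  have hδ : 0 < δ := div_pos (sub_pos.mpr hab) (Nat.cast_pos.mpr hm)
  have hmδ : m * δ = b - a := mul_div_cancel₀ _ (Nat.cast_pos.mpr hm).ne'
  set I : ℕ → Set ℝ := fun j => Ico (a + j * δ) (a + j * δ + δ)
  set E : ℕ → Set Ω := fun j => {ω | (∀ i < n, X i ω ∈ I j) ∧ X 0 ω ≠ X 1 ω}
  have hEsub : ∀ j < m, E j ⊆ {ω | (m : ℝ) ≤ |Tstat X n ω|} := by
    rintro j hj ω ⟨hmem, hne⟩
    have hj' : (j : ℝ) + 1 ≤ m := by exact_mod_cast hj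
    have hIsub : I j ⊆ Ico a b :=
      Ico_subset_Ico (le_add_of_nonneg_right (by positivity)) (by nlinarith)
    have := le_abs_tstat_of_mem_Ico habs hn hδ hIsub hmem hne
    rwa [← hmδ, mul_div_cancel_right₀ _ hδ.ne'] at this
  have hEdisj : (Finset.range m : Set ℕ).PairwiseDisjoint E := fun j _ k _ hjk =>
    ((pairwise_disjoint_Ico_add_mul a δ hjk).preimage (X 0)).mono
      (fun _ h => h.1 0 (by omega)) (fun _ h => h.1 0 (by omega))
  have hEmeas : ∀ j, MeasurableSet (E j) := fun j => by
    simp only [E, ofPred_and, ofPred_forall]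
    exact (MeasurableSet.iInter fun i => MeasurableSet.iInter fun _ =>
      hmeas i measurableSet_Ico).inter (measurableSet_eq_fun (hmeas 0) (hmeas 1)).compl
  obtain ⟨k, rfl⟩ : ∃ k, n = k + 1 := ⟨n - 1, by omega⟩
  rw [← show a + m * δ = b by linarith, Nat.add_sub_cancel]
  calc _ ≤ ∑ j ∈ Finset.range m, Fc (I j) ^ (k + 1) :=
        ofReal_measureReal_Ico_pow_div_le_sum_pow Fc a δ hδ.le m k
    _ ≤ ∑ j ∈ Finset.range m, P (E j) := Finset.sum_le_sum fun j _ =>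
        pow_le_measure_forall_mem_and_ne hmeas hindep hdist hle hn measurableSet_Ico
    _ = P (⋃ j ∈ Finset.range m, E j) :=
        (measure_biUnion_finset hEdisj fun j _ => hEmeas j).symm
    _ ≤ _ := measure_mono (iUnion₂_subset fun j hj => hEsub j (Finset.mem_range.mp hj))

end Sample

theorem lintegral_tstat_eq_top_of_continuous_part_general {Ω : Type*} [MeasurableSpace Ω]
    (P : Measure Ω) [IsProbabilityMeasure P]
    (X : ℕ → Ω → ℝ) (hmeas : ∀ i, Measurable (X i))
    (hindep : iIndepFun X P)
    (F Fd Fc : Measure ℝ) (hdist : ∀ i, P.map (X i) = F)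
    (hdecomp : F = Fd + Fc)
    (hFc : ∀ x : ℝ, Fc {x} = 0) (hFc0 : Fc ≠ 0)
    (n : ℕ) (hn : 2 ≤ n) (r : ℝ) (hr : (n : ℝ) - 1 ≤ r) :
    (∫⁻ ω, ENNReal.ofReal (|Tstat X n ω| ^ r) ∂P) = ⊤ := by
  have hle : Fc ≤ F := hdecomp ▸ Measure.le_add_left le_rfl
  have : IsProbabilityMeasure F :=
    hdist 0 ▸ Measure.isProbabilityMeasure_map (hmeas 0).aemeasurable
  have : IsFiniteMeasure Fc := isFiniteMeasure_of_le F hle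
  have : NullSingletonClass Fc := ⟨hFc⟩
  obtain ⟨a, b, hab, habs, hpos⟩ := exists_Ico_pos_measure_sub_le_abs (hFc 0) hFc0
  have hβ : 0 < Fc.real (Ico a b) := ENNReal.toReal_pos hpos.ne' (measure_ne_top _ _)
  have h2n : (2 : ℝ) ≤ n := by exact_mod_cast hn
  have hkr : ((n - 1 : ℕ) : ℝ) ≤ r := by rw [Nat.cast_sub (by omega), Nat.cast_one]; exact hr
  exact lintegral_rpow_eq_top_of_tail_nat (ae_of_all _ fun _ => abs_nonneg _)
    (measurable_tstat hmeas n).abs.aemeasurable (pow_pos hβ n) (by linarith) hkr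
    fun m hm => ofReal_div_pow_le_measure_le_abs_tstat hmeas hindep hdist hle hn hab habs hm

/-- Theorem 3 (Theorem `thm0`): if the common distribution `F` of the i.i.d. `X_i`
decomposes as `F = F_d + F_c` with `F_d` discrete, `F_c` atomless and `F_c ≠ 0`, then for
every `n ≥ 2` and every `r ≥ n − 1`, `E|T_n|^r = ∞`. -/
theorem lintegral_tstat_eq_top_of_continuous_part {Ω : Type*} [MeasurableSpace Ω]
    (P : Measure Ω) [IsProbabilityMeasure P]
    (X : ℕ → Ω → ℝ) (hmeas : ∀ i, Measurable (X i))
    (hindep : iIndepFun X P)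
    (F Fd Fc : Measure ℝ) (hdist : ∀ i, P.map (X i) = F)
    (hdecomp : F = Fd + Fc)
    (hFd : ∃ s : Set ℝ, s.Countable ∧ Fd sᶜ = 0)
    (hFc : ∀ x : ℝ, Fc {x} = 0) (hFc0 : Fc ≠ 0)
    (n : ℕ) (hn : 2 ≤ n) (r : ℝ) (hr : (n : ℝ) - 1 ≤ r) :
    (∫⁻ ω, ENNReal.ofReal (|Tstat X n ω| ^ r) ∂P) = ⊤ :=
  lintegral_tstat_eq_top_of_continuous_part_general P X hmeas hindep F Fd Fc hdist hdecomp hFc hFc0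
    n hn r hr

end
end

section
/- Let μ be a finite Borel measure on ℝ with total mass ε > 0 such that μ(ℝ ∖ [−C, C]) = 0 for some C > 0. Then for every h > 0, ∫ μ([x − h, x + h]) dμ(x) ≥ ε² h / (2C + h). -/
/-!
Cut `[-C, C]` into `N = ⌊2C/h⌋ + 1` consecutive intervals of length `h`. A point `x` sees its
whole cell inside `[x - h, x + h]`, so the integral is at least the sum of the squared masses of
the cells, and by Cauchy–Schwarz this sum is at least `ε² / N ≥ ε² h / (2C + h)`.
-/

open MeasureTheory Finset Set
open scoped ENNReal

theorem ENNReal.sq_sum_le_card_mul_sum_sq {ι : Type*} (s : Finset ι) (f : ι → ℝ≥0∞) :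
    (∑ i ∈ s, f i) ^ 2 ≤ #s * ∑ i ∈ s, f i ^ 2 := by
  by_cases hfin : ∀ i ∈ s, f i ≠ ∞
  · have hcoe : ∀ i ∈ s, f i = (f i).toNNReal := fun i hi => (coe_toNNReal (hfin i hi)).symm
    rw [sum_congr rfl hcoe, sum_congr rfl fun i hi => congrArg (· ^ 2) (hcoe i hi)]
    exact_mod_cast _root_.sq_sum_le_card_mul_sum_sq (s := s) (f := fun i => (f i).toNNReal)
  · push Not at hfin
    obtain ⟨i, hi, hfi⟩ := hfin
    have hsum : ∑ i ∈ s, f i ^ 2 = ∞ := sum_eq_top.2 ⟨i, hi, by simp [hfi]⟩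
    rw [hsum, mul_top (by simpa using ne_empty_of_mem hi)]
    exact le_top

theorem measure_univ_sq_le_card_mul_lintegral_measure_singleton {ι : Type*} [MeasurableSpace ι]
    [Countable ι] [MeasurableSingletonClass ι] (ν : Measure ι) (s : Finset ι)
    (hs : ν (↑s)ᶜ = 0) : ν univ ^ 2 ≤ #s * ∫⁻ k, ν {k} ∂ν :=
  calc ν univ ^ 2 ≤ (∑ k ∈ s, ν {k}) ^ 2 := by
        gcongr
        simpa [hs] using measure_univ_le_add_compl (μ := ν) s
    _ ≤ #s * ∑ k ∈ s, ν {k} ^ 2 := ENNReal.sq_sum_le_card_mul_sum_sq s _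
    _ ≤ #s * ∫⁻ k, ν {k} ∂ν := by
        rw [lintegral_countable']
        simp_rw [sq]
        gcongr
        exact ENNReal.sum_le_tsum s

theorem measure_univ_sq_le_card_mul_lintegral_measure_fiber {α ι : Type*} [MeasurableSpace α]
    [MeasurableSpace ι] [Countable ι] [MeasurableSingletonClass ι] (μ : Measure α) {f : α → ι}
    (hf : Measurable f) (s : Finset ι) (hs : μ (f ⁻¹' (↑s)ᶜ) = 0) :
    μ univ ^ 2 ≤ #s * ∫⁻ x, μ (f ⁻¹' {f x}) ∂μ := by
  have hmap := measure_univ_sq_le_card_mul_lintegral_measure_singleton (μ.map f) s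
    (by rwa [Measure.map_apply hf (s.measurableSet.compl)])
  rwa [Measure.map_apply hf MeasurableSet.univ, preimage_univ,
    lintegral_map (measurable_of_countable _) hf,
    lintegral_congr fun x => Measure.map_apply hf (measurableSet_singleton (f x))] at hmap

theorem preimage_floor_div_subset_Icc {h : ℝ} (hh : 0 < h) (c x : ℝ) :
    (fun y => ⌊(y + c) / h⌋) ⁻¹' {⌊(x + c) / h⌋} ⊆ Icc (x - h) (x + h) := by
  intro y hy
  have hlt := Int.abs_sub_lt_one_of_floor_eq_floor hy
  rw [← sub_div, add_sub_add_right_eq_sub, abs_div, abs_of_pos hh, div_lt_one hh, abs_lt] at hlt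
  constructor <;> linarith [hlt.1, hlt.2]

theorem floor_add_div_mem_Icc {C h x : ℝ} (hh : 0 < h) (hx : x ∈ Icc (-C) C) :
    ⌊(x + C) / h⌋ ∈ Finset.Icc 0 ⌊2 * C / h⌋ := by
  rw [Finset.mem_Icc]
  exact ⟨Int.floor_nonneg.2 (div_nonneg (by linarith [hx.1]) hh.le),
    Int.floor_le_floor (div_le_div_of_nonneg_right (by linarith [hx.2]) hh.le)⟩

theorem card_Icc_zero_floor_div_mul_le {a h : ℝ} (ha : 0 ≤ a) (hh : 0 < h) :
    (#(Finset.Icc 0 ⌊a / h⌋) : ℝ) * h ≤ a + h := by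
  have hfloor : 0 ≤ ⌊a / h⌋ := Int.floor_nonneg.2 (by positivity)
  rw [Int.card_Icc, sub_zero, ← Int.cast_natCast, Int.toNat_of_nonneg (by omega)]
  push_cast
  nlinarith [Int.floor_le (a / h), div_mul_cancel₀ a hh.ne']

theorem lintegral_interval_measure_ge_general (μ : Measure ℝ)
    (C : ℝ) (hC : 0 < C) (hsupp : μ (Set.Icc (-C) C)ᶜ = 0)
    (ε : ℝ) (hε : 0 < ε) (hmass : μ Set.univ = ENNReal.ofReal ε)
    (h : ℝ) (hh : 0 < h) :
    ENNReal.ofReal (ε ^ 2 * h / (2 * C + h)) ≤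
      ∫⁻ x, μ (Set.Icc (x - h) (x + h)) ∂μ := by
  set f : ℝ → ℤ := fun x => ⌊(x + C) / h⌋
  set s : Finset ℤ := Finset.Icc 0 ⌊2 * C / h⌋
  have hs : μ (f ⁻¹' (↑s)ᶜ) = 0 :=
    measure_mono_null (compl_subset_compl.2 fun x hx => floor_add_div_mem_Icc hh hx) hsupp
  have hbound := measure_univ_sq_le_card_mul_lintegral_measure_fiber μ (by fun_prop) s hs
  have hfiber : ∫⁻ x, μ (f ⁻¹' {f x}) ∂μ ≤ ∫⁻ x, μ (Set.Icc (x - h) (x + h)) ∂μ :=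
    lintegral_mono fun x => measure_mono (preimage_floor_div_subset_Icc hh C x)
  have hcard : (#s : ℝ) * h ≤ 2 * C + h := card_Icc_zero_floor_div_mul_le (by positivity) hh
  have hs_ne : (#s : ℝ≥0∞) ≠ 0 := by simpa [s] using Int.floor_nonneg.2 (by positivity)
  rw [hmass, ← ENNReal.ofReal_pow hε.le] at hbound
  rw [← ENNReal.mul_le_mul_iff_right hs_ne (ENNReal.natCast_ne_top _)]
  calc (#s : ℝ≥0∞) * ENNReal.ofReal (ε ^ 2 * h / (2 * C + h))
      = ENNReal.ofReal (#s * (ε ^ 2 * h / (2 * C + h))) := by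
        rw [ENNReal.ofReal_mul (by positivity), ENNReal.ofReal_natCast]
    _ ≤ ENNReal.ofReal (ε ^ 2) := by
        gcongr
        rw [mul_div_assoc', div_le_iff₀ (by positivity)]
        nlinarith [mul_le_mul_of_nonneg_left hcard (sq_nonneg ε)]
    _ ≤ #s * ∫⁻ x, μ (f ⁻¹' {f x}) ∂μ := hbound
    _ ≤ #s * ∫⁻ x, μ (Set.Icc (x - h) (x + h)) ∂μ := by gcongr

/-- For a finite Borel measure `μ` on `ℝ` with total mass `ε > 0` carried by `[−C, C]`,
and every `h > 0`: `∫ μ([x − h, x + h]) dμ(x) ≥ ε²h/(2C + h)`. -/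
theorem lintegral_interval_measure_ge (μ : Measure ℝ) [IsFiniteMeasure μ]
    (C : ℝ) (hC : 0 < C) (hsupp : μ (Set.Icc (-C) C)ᶜ = 0)
    (ε : ℝ) (hε : 0 < ε) (hmass : μ Set.univ = ENNReal.ofReal ε)
    (h : ℝ) (hh : 0 < h) :
    ENNReal.ofReal (ε ^ 2 * h / (2 * C + h)) ≤
      ∫⁻ x, μ (Set.Icc (x - h) (x + h)) ∂μ :=
  lintegral_interval_measure_ge_general μ C hC hsupp ε hε hmass h hh
end

section
/- Let n ≥ 2 and let μ be a nonzero finite Borel measure on ℝ such that μ(ℝ ∖ ([−C, −1/C] ∪ [1/C, C])) = 0 for some C > 1. Then there exists a constant η > 0 such that for every h ∈ (0, 1], ∫ (μ((x − h, x + h)) / h)^{n−1} dμ(x) ≥ η. -/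
/-!
Cut `[a, b] ⊇ supp μ` into `N ≈ (b - a) / h` consecutive intervals `I` of length `h`. Every
point of `I` sees all of `I` within distance `h`, so with `m = n - 1` the integral is at least
`∑ μ(I)^(m+1) / h^m`, and by the power-mean inequality this is at least
`μ(ℝ)^(m+1) / (N h)^m ≥ μ(ℝ)^(m+1) / (b - a + h)^m`.
-/

open MeasureTheory Set Function
open scoped ENNReal Finset

theorem ENNReal.pow_sum_le_card_mul_sum_pow {ι : Type*} {s : Finset ι} {f : ι → ℝ≥0∞}
    (hf : ∀ i ∈ s, f i ≠ ∞) (n : ℕ) :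
    (∑ i ∈ s, f i) ^ (n + 1) ≤ (#s : ℝ≥0∞) ^ n * ∑ i ∈ s, f i ^ (n + 1) := by
  have key := ENNReal.coe_le_coe.mpr <|
    _root_.pow_sum_le_card_mul_sum_pow (s := s) (f := fun i => (f i).toNNReal)
      (fun _ _ => zero_le) n
  push_cast at key
  rwa [Finset.sum_congr rfl fun i hi => ENNReal.coe_toNNReal (hf i hi),
    Finset.sum_congr rfl fun i hi => congrArg (· ^ (n + 1)) (ENNReal.coe_toNNReal (hf i hi))]
    at key

theorem sum_mul_measure_le_lintegral {α ι : Type*} [MeasurableSpace α] {μ : Measure α}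
    {t : Finset ι} {s : ι → Set α} (hs : ∀ j ∈ t, MeasurableSet (s j))
    (hd : (t : Set ι).PairwiseDisjoint s) {f : α → ℝ≥0∞} {c : ι → ℝ≥0∞}
    (hf : ∀ j ∈ t, ∀ x ∈ s j, c j ≤ f x) :
    ∑ j ∈ t, c j * μ (s j) ≤ ∫⁻ x, f x ∂μ :=
  calc ∑ j ∈ t, c j * μ (s j) = ∑ j ∈ t, ∫⁻ _ in s j, c j ∂μ := by simp
    _ ≤ ∑ j ∈ t, ∫⁻ x in s j, f x ∂μ :=
      Finset.sum_le_sum fun j hj => setLIntegral_mono' (hs j hj) (hf j hj)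
    _ = ∫⁻ x in ⋃ j ∈ t, s j, f x ∂μ := (lintegral_biUnion_finset hd hs f).symm
    _ ≤ ∫⁻ x, f x ∂μ := setLIntegral_le_lintegral _ _

theorem pairwise_disjoint_Ico_add_nat_mul (a h : ℝ) :
    Pairwise (Disjoint on fun j : ℕ => Ico (a + j * h) (a + j * h + h)) := by
  have := (pairwise_disjoint_Ico_add_zsmul a h).comp_of_injective Nat.cast_injective
  convert this using 3 with j; simp [add_mul, add_assoc]

theorem Icc_subset_biUnion_Ico_add_nat_mul {a b h : ℝ} (hh : 0 < h) :
    Icc a b ⊆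
      ⋃ j ∈ Finset.range (⌊(b - a) / h⌋₊ + 1), Ico (a + j * h) (a + j * h + h) := by
  rintro x ⟨hax, hxb⟩
  have hj := Nat.floor_le (div_nonneg (sub_nonneg.2 hax) hh.le)
  have hj' := Nat.lt_floor_add_one ((x - a) / h)
  refine mem_biUnion (x := ⌊(x - a) / h⌋₊) (Finset.mem_range.2 ?_) ⟨?_, ?_⟩
  · exact Nat.lt_succ_of_le (Nat.floor_mono (by gcongr))
  · rw [le_div_iff₀ hh] at hj; linarith
  · rw [div_lt_iff₀ hh] at hj'; linarith

theorem Ico_subset_Ioo_sub_add {c h x : ℝ} (hx : x ∈ Ico c (c + h)) :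
    Ico c (c + h) ⊆ Ioo (x - h) (x + h) :=
  fun _ hy => ⟨by linarith [hx.2, hy.1], by linarith [hx.1, hy.2]⟩

theorem measure_univ_pow_div_le_lintegral_concentration (μ : Measure ℝ) [IsFiniteMeasure μ]
    {a b : ℝ} (hab : a ≤ b) (hμ : μ (Icc a b)ᶜ = 0) (m : ℕ) {h : ℝ} (hh : 0 < h) :
    μ univ ^ (m + 1) / ENNReal.ofReal (b - a + h) ^ m ≤
      ∫⁻ x, (μ (Ioo (x - h) (x + h)) / ENNReal.ofReal h) ^ m ∂μ := by
  set N := ⌊(b - a) / h⌋₊ + 1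
  set I : ℕ → Set ℝ := fun j => Ico (a + j * h) (a + j * h + h)
  set H := ENNReal.ofReal h
  set S := ∑ j ∈ Finset.range N, μ (I j) ^ (m + 1)
  have hcover : μ univ ≤ ∑ j ∈ Finset.range N, μ (I j) :=
    calc μ univ = μ (Icc a b) := (measure_congr (ae_eq_univ.mpr hμ)).symm
      _ ≤ μ (⋃ j ∈ Finset.range N, I j) :=
        measure_mono (Icc_subset_biUnion_Ico_add_nat_mul hh)
      _ ≤ ∑ j ∈ Finset.range N, μ (I j) := measure_biUnion_finset_le _ _
  have hpow_mean : μ univ ^ (m + 1) ≤ (N : ℝ≥0∞) ^ m * S := by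
    simpa using (pow_le_pow_left₀ zero_le hcover _).trans
      (ENNReal.pow_sum_le_card_mul_sum_pow (fun j _ => measure_ne_top μ (I j)) m)
  have hintegral : S / H ^ m ≤ ∫⁻ x, (μ (Ioo (x - h) (x + h)) / H) ^ m ∂μ := by
    have hS : S / H ^ m = ∑ j ∈ Finset.range N, (μ (I j) / H) ^ m * μ (I j) := by
      simp only [S, div_eq_mul_inv, Finset.sum_mul, mul_pow, ENNReal.inv_pow, pow_succ]
      exact Finset.sum_congr rfl fun _ _ => by ring
    rw [hS]
    exact sum_mul_measure_le_lintegral (fun _ _ => measurableSet_Ico)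
      ((pairwise_disjoint_Ico_add_nat_mul a h).set_pairwise _)
      fun j _ x hx => by gcongr; exact Ico_subset_Ioo_sub_add hx
  have hNH : (N : ℝ≥0∞) * H ≤ ENNReal.ofReal (b - a + h) := by
    rw [← ENNReal.ofReal_natCast, ← ENNReal.ofReal_mul (by positivity)]
    refine ENNReal.ofReal_le_ofReal ?_
    have := Nat.floor_le (div_nonneg (sub_nonneg.2 hab) hh.le)
    rw [le_div_iff₀ hh] at this
    push_cast [N]
    linarith
  have hH : H ^ m ≠ 0 := pow_ne_zero _ (ENNReal.ofReal_pos.2 hh).ne'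
  calc μ univ ^ (m + 1) / ENNReal.ofReal (b - a + h) ^ m
      ≤ μ univ ^ (m + 1) / ((N : ℝ≥0∞) * H) ^ m := by gcongr
    _ ≤ S / H ^ m := by
      refine ENNReal.div_le_of_le_mul (hpow_mean.trans_eq ?_)
      rw [mul_pow, mul_left_comm, ENNReal.div_mul_cancel hH (by finiteness), mul_comm]
    _ ≤ _ := hintegral

theorem exists_lintegral_concentration_ge_general (n : ℕ)
    (μ : Measure ℝ) [IsFiniteMeasure μ] (hμ : μ ≠ 0)
    (C : ℝ)
    (hsupp : μ (Set.Icc (-C) (-(1 / C)) ∪ Set.Icc (1 / C) C)ᶜ = 0) :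
    ∃ η : ℝ, 0 < η ∧ ∀ h : ℝ, h ∈ Set.Ioc (0 : ℝ) 1 →
      ENNReal.ofReal η ≤
        ∫⁻ x, (μ (Set.Ioo (x - h) (x + h)) / ENNReal.ofReal h) ^ (n - 1) ∂μ := by
  obtain ⟨r, hr0, hr⟩ :=
    (isCompact_Icc.union isCompact_Icc).isBounded.subset_closedBall_lt 0 (0 : ℝ)
  rw [Real.closedBall_eq_Icc, zero_sub, zero_add] at hr
  have hμr : μ (Icc (-r) r)ᶜ = 0 := measure_mono_null (compl_subset_compl.2 hr) hsupp
  have hμ0 : 0 < (μ univ).toReal :=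
    ENNReal.toReal_pos (Measure.measure_univ_ne_zero.2 hμ) (measure_ne_top μ univ)
  refine ⟨(μ univ).toReal ^ (n - 1 + 1) / (2 * r + 1) ^ (n - 1), by positivity,
    fun h ⟨hh0, hh1⟩ => ?_⟩
  calc ENNReal.ofReal ((μ univ).toReal ^ (n - 1 + 1) / (2 * r + 1) ^ (n - 1))
      = μ univ ^ (n - 1 + 1) / ENNReal.ofReal (2 * r + 1) ^ (n - 1) := by
        rw [ENNReal.ofReal_div_of_pos (by positivity), ENNReal.ofReal_pow hμ0.le,
          ENNReal.ofReal_toReal (measure_ne_top μ univ), ENNReal.ofReal_pow (by positivity)]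
    _ ≤ μ univ ^ (n - 1 + 1) / ENNReal.ofReal (r - -r + h) ^ (n - 1) := by
        gcongr; linarith
    _ ≤ _ := measure_univ_pow_div_le_lintegral_concentration μ (by linarith) hμr _ hh0

/-- For `n ≥ 2` and a nonzero finite Borel measure `μ` on `ℝ` carried by
`[−C, −1/C] ∪ [1/C, C]` for some `C > 1`, there is a constant `η > 0` such that for every
`h ∈ (0, 1]`: `∫ (μ((x − h, x + h))/h)^{n−1} dμ(x) ≥ η`. -/
theorem exists_lintegral_concentration_ge (n : ℕ) (hn : 2 ≤ n)
    (μ : Measure ℝ) [IsFiniteMeasure μ] (hμ : μ ≠ 0)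
    (C : ℝ) (hC : 1 < C)
    (hsupp : μ (Set.Icc (-C) (-(1 / C)) ∪ Set.Icc (1 / C) C)ᶜ = 0) :
    ∃ η : ℝ, 0 < η ∧ ∀ h : ℝ, h ∈ Set.Ioc (0 : ℝ) 1 →
      ENNReal.ofReal η ≤
        ∫⁻ x, (μ (Set.Ioo (x - h) (x + h)) / ENNReal.ofReal h) ^ (n - 1) ∂μ :=
  exists_lintegral_concentration_ge_general n μ hμ C hsupp
end

section
/- Let X be a real random variable whose distribution is absolutely continuous with a bounded density function f, and suppose there exists N > 0 such that f(x_2) ≤ f(x_1) whenever N ≤ x_1 ≤ x_2 or −N ≥ x_1 ≥ x_2 (i.e., f is non-increasing on [N,∞) and non-decreasing on (−∞,−N]). Then q(h) = O(h): there exists a constant C such that q(h) ≤ C·h for all h ∈ (0, 1/2]. -/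
/-!
Near the origin, `|x| ≤ 4N`, the ball `|y - x| ≤ |x| h` has length `2|x|h ≤ 8Nh`, so the bound
`f ≤ M` suffices. Far out, say `x > 4N`, the ball lies in `[x/2, ∞)`, where `f ≤ f(x/2)`; and
since `f ≥ f(x/2)` on `[N, x/2]`, the total mass `1` forces `f(x/2) ≤ 1 / (x/2 - N) ≤ 4/x`.
The ball then has mass at most `(4/x) · 2xh = 8h`.
-/

open MeasureTheory Set Metric

section
variable {f : ℝ → ℝ}

lemma withDensity_closedBall_le {c : ℝ} (hc : 0 ≤ c) {x r : ℝ}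
    (hf : ∀ y ∈ closedBall x r, f y ≤ c) :
    volume.withDensity (fun y => ENNReal.ofReal (f y)) (closedBall x r)
      ≤ ENNReal.ofReal (2 * c * r) := by
  rw [withDensity_apply _ measurableSet_closedBall]
  calc ∫⁻ y in closedBall x r, ENNReal.ofReal (f y)
      ≤ ∫⁻ _ in closedBall x r, ENNReal.ofReal c :=
        setLIntegral_mono' measurableSet_closedBall fun y hy =>
          ENNReal.ofReal_le_ofReal (hf y hy)
    _ = ENNReal.ofReal (2 * c * r) := by
        rw [setLIntegral_const, Real.volume_closedBall, ← ENNReal.ofReal_mul hc, mul_left_comm,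
          mul_assoc]

variable [IsProbabilityMeasure (volume.withDensity fun y => ENNReal.ofReal (f y))]

lemma mul_sub_le_one_of_forall_le {p q c : ℝ} (hpq : p ≤ q) (hf : ∀ y ∈ Icc p q, c ≤ f y) :
    c * (q - p) ≤ 1 := by
  rw [← ENNReal.ofReal_le_one, ENNReal.ofReal_mul' (sub_nonneg.2 hpq),
    ← Real.volume_Icc, ← setLIntegral_const]
  calc ∫⁻ _ in Icc p q, ENNReal.ofReal c
      ≤ ∫⁻ y in Icc p q, ENNReal.ofReal (f y) :=
        setLIntegral_mono' measurableSet_Icc fun y hy => ENNReal.ofReal_le_ofReal (hf y hy)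
    _ = volume.withDensity (fun y => ENNReal.ofReal (f y)) (Icc p q) :=
        (withDensity_apply _ measurableSet_Icc).symm
    _ ≤ 1 := prob_le_one

lemma le_two_div_of_antitoneOn {N a y : ℝ} (hf : AntitoneOn f (Ici N)) (hN : 0 < N)
    (ha : 2 * N ≤ a) (hay : a ≤ y) : f y ≤ 2 / a := by
  have hNa : N ≤ a := by linarith
  have hmass : f a * (a - N) ≤ 1 :=
    mul_sub_le_one_of_forall_le hNa fun z hz => hf hz.1 hNa hz.2
  have hfa : f a ≤ 2 / a := by
    rw [le_div_iff₀ (by linarith)]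
    rcases le_or_gt 0 (f a) with hpos | hneg <;> nlinarith
  exact (hf hNa (hNa.trans hay) hay).trans hfa

lemma le_two_div_neg_of_monotoneOn {N b y : ℝ} (hf : MonotoneOn f (Iic (-N))) (hN : 0 < N)
    (hb : b ≤ -(2 * N)) (hyb : y ≤ b) : f y ≤ 2 / -b := by
  have hbN : b ≤ -N := by linarith
  have hmass : f b * (-N - b) ≤ 1 :=
    mul_sub_le_one_of_forall_le hbN fun z hz => hf hbN hz.2 hz.1
  have hfb : f b ≤ 2 / -b := by
    rw [le_div_iff₀ (by linarith)]
    rcases le_or_gt 0 (f b) with hpos | hneg <;> nlinarith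
  exact (hf (hyb.trans hbN) hbN hyb).trans hfb

lemma le_four_div_abs_of_mem_closedBall {N x h : ℝ} (hanti : AntitoneOn f (Ici N))
    (hmono : MonotoneOn f (Iic (-N))) (hN : 0 < N) (hx : 4 * N < |x|) (hh : h ≤ 1 / 2) :
    ∀ y ∈ closedBall x (|x| * h), f y ≤ 4 / |x| := by
  intro y hy
  rw [mem_closedBall, Real.dist_eq, abs_le] at hy
  rcases le_or_gt 0 x with hx0 | hx0
  · rw [abs_of_nonneg hx0] at hx hy ⊢
    have hbound : f y ≤ 2 / (x / 2) :=
      le_two_div_of_antitoneOn hanti hN (by linarith) (by nlinarith)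
    exact hbound.trans_eq (by field_simp; norm_num)
  · rw [abs_of_neg hx0] at hx hy ⊢
    have hbound : f y ≤ 2 / -(x / 2) :=
      le_two_div_neg_of_monotoneOn hmono hN (by linarith) (by nlinarith)
    exact hbound.trans_eq (by field_simp; norm_num)

end

/-- Proposition 1 (Proposition `prop4`): if `X` has an absolutely continuous distribution with
bounded density `f` which is non-increasing on `[N, ∞)` and non-decreasing on `(−∞, −N]` for
some `N > 0`, then the concentration function satisfies `q(h) = O(h)`: there is a constant `C`
with `q(h) ≤ C·h` for all `h ∈ (0, 1/2]`. -/
theorem concentration_le_of_monotone_density (μ : Measure ℝ) [IsProbabilityMeasure μ]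
    (f : ℝ → ℝ) (hf0 : ∀ x, 0 ≤ f x)
    (hμ : μ = volume.withDensity fun x => ENNReal.ofReal (f x))
    (M : ℝ) (hM : ∀ x, f x ≤ M)
    (N : ℝ) (hN : 0 < N)
    (hmono : ∀ x₁ x₂ : ℝ, (N ≤ x₁ ∧ x₁ ≤ x₂) ∨ (x₂ ≤ x₁ ∧ x₁ ≤ -N) → f x₂ ≤ f x₁) :
    ∃ C : ℝ, ∀ h ∈ Set.Ioc (0 : ℝ) (1 / 2), ∀ x : ℝ,
      μ {y | |y - x| ≤ |x| * h} ≤ ENNReal.ofReal (C * h) := by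
  subst hμ
  have hanti : AntitoneOn f (Ici N) := fun a ha _ _ hab => hmono a _ (Or.inl ⟨ha, hab⟩)
  have hmono' : MonotoneOn f (Iic (-N)) := fun _ _ b hb hab => hmono b _ (Or.inr ⟨hab, hb⟩)
  have hM0 : 0 ≤ M := (hf0 0).trans (hM 0)
  refine ⟨8 * M * N + 8, fun h ⟨hh0, hh⟩ x => ?_⟩
  change volume.withDensity _ (closedBall x (|x| * h)) ≤ _
  rcases le_or_gt |x| (4 * N) with hnear | hfar
  · calc _ ≤ ENNReal.ofReal (2 * M * (|x| * h)) := withDensity_closedBall_le hM0 fun y _ => hM y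
      _ ≤ _ := ENNReal.ofReal_le_ofReal (by nlinarith [mul_le_mul_of_nonneg_left hnear hM0])
  · have hx : 0 < |x| := by linarith
    calc _ ≤ ENNReal.ofReal (2 * (4 / |x|) * (|x| * h)) :=
          withDensity_closedBall_le (by positivity)
            (le_four_div_abs_of_mem_closedBall hanti hmono' hN hfar hh)
      _ = ENNReal.ofReal (8 * h) := by field_simp; ring_nf
      _ ≤ _ := ENNReal.ofReal_le_ofReal (by nlinarith [mul_pos (mul_pos hx hN) hh0])
end

section
/- Let X have distribution F and fix r > 0. For integers n ≥ 2 and reals δ > 0 define R_{n,δ} = ∫_{x≠0} ∫_0^δ n^r · h^{−(r+1)} · ((P(|X − x| < h|x|))^{n−1} − p_x^{n−1}) dh dF(x), where p_x = P(X = x). If there exists an integer n_0 ≥ 2 such that R_{n,ε} < ∞ for every n ≥ n_0 and every ε > 0, then there exists δ > 0 such that lim_{n→∞} R_{n,δ} = 0. -/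
open MeasureTheory Filter Topology Set Metric
open scoped ENNReal

noncomputable section

/-- `R_{n,δ} = ∫_{x≠0} ∫_0^δ n^r h^{−(r+1)} ((P(|X − x| < h|x|))^{n−1} − p_x^{n−1}) dh dF(x)`,
where `μ` is the distribution `F` of `X` and `p_x = μ {x}`. -/
def Rint (μ : Measure ℝ) (r : ℝ) (n : ℕ) (δ : ℝ) : ENNReal :=
  ∫⁻ x in {x : ℝ | x ≠ 0},
    ∫⁻ h in Set.Ioo (0 : ℝ) δ,
      ENNReal.ofReal ((n : ℝ) ^ r * h ^ (-(r + 1))) *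
        (μ {y | |y - x| < h * |x|} ^ (n - 1) - μ {x} ^ (n - 1)) ∂volume ∂μ

/-!
If `F` is a point mass the integrand vanishes almost everywhere. Otherwise `F` charges two
disjoint balls, and a ball `B(x, h|x|)` with `h` small cannot meet both of them, so its mass
`q = P(|X - x| < h|x|)` stays below some `Q < 1`. For `p ≤ q ≤ Q` and `n ≥ n₀`,
`q^(n-1) - p^(n-1) ≤ (n-1) q^(n-2) (q - p) ≤ (n-1) Q^(n-n₀) (q^(n₀-1) - p^(n₀-1))`,
hence `R_{n,δ} ≤ (n/n₀)^r n Q^(n-n₀) R_{n₀,δ}`, which tends to `0` because `R_{n₀,δ} < ∞` and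
the geometric factor beats the polynomial one.
-/

namespace ENNReal

lemma pow_eq_geom_sum₂_mul_add {p q : ℝ≥0∞} (hpq : p ≤ q) (n : ℕ) :
    q ^ n = (∑ i ∈ Finset.range n, q ^ i * p ^ (n - 1 - i)) * (q - p) + p ^ n := by
  simpa [tsub_add_cancel_of_le hpq] using (geom_sum₂_mul_add (q - p) p n).symm

lemma pow_sub_pow_le_mul_pow_mul_sub {p q : ℝ≥0∞} (hpq : p ≤ q) (n : ℕ) :
    q ^ n - p ^ n ≤ n * q ^ (n - 1) * (q - p) := by
  rw [tsub_le_iff_right]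
  conv_lhs => rw [pow_eq_geom_sum₂_mul_add hpq n]
  gcongr
  calc ∑ i ∈ Finset.range n, q ^ i * p ^ (n - 1 - i)
      ≤ ∑ i ∈ Finset.range n, q ^ (n - 1) := Finset.sum_le_sum fun i hi => by
        rw [← Nat.add_sub_of_le (Nat.le_sub_one_of_lt (Finset.mem_range.1 hi)), pow_add,
          Nat.add_sub_cancel_left]
        gcongr
    _ = n * q ^ (n - 1) := by simp

lemma pow_mul_sub_le_pow_sub_pow {p q : ℝ≥0∞} (hpq : p ≤ q) (hq : q ≠ ⊤) (n : ℕ) :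
    q ^ n * (q - p) ≤ q ^ (n + 1) - p ^ (n + 1) := by
  apply ENNReal.le_sub_of_add_le_right (pow_ne_top (ne_top_of_le_ne_top hq hpq))
  rw [pow_eq_geom_sum₂_mul_add hpq (n + 1)]
  gcongr
  simpa using Finset.single_le_sum (f := fun i => q ^ i * p ^ (n + 1 - 1 - i))
    (fun _ _ => zero_le) (Finset.self_mem_range_succ n)

lemma pow_sub_pow_le_mul_pow_mul_pow_sub_pow {p q Q : ℝ≥0∞} (hpq : p ≤ q) (hqQ : q ≤ Q)
    (hq : q ≠ ⊤) {a N : ℕ} (ha : 0 < a) (haN : a ≤ N) :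
    q ^ N - p ^ N ≤ N * Q ^ (N - a) * (q ^ a - p ^ a) := by
  obtain ⟨j, rfl⟩ : ∃ j, a = j + 1 := ⟨a - 1, by omega⟩
  calc q ^ N - p ^ N ≤ N * q ^ (N - 1) * (q - p) := pow_sub_pow_le_mul_pow_mul_sub hpq N
    _ = N * q ^ (N - (j + 1)) * (q ^ j * (q - p)) := by
      rw [mul_assoc, mul_assoc, ← mul_assoc (q ^ _), ← pow_add]
      congr 4
      omega
    _ ≤ N * Q ^ (N - (j + 1)) * (q ^ (j + 1) - p ^ (j + 1)) := by
      gcongr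
      exact pow_mul_sub_le_pow_sub_pow hpq hq j

end ENNReal

lemma tendsto_rpow_mul_pow_of_lt_one (s : ℝ) {q : ℝ} (hq0 : 0 < q) (hq1 : q < 1) :
    Tendsto (fun n : ℕ => (n : ℝ) ^ s * q ^ n) atTop (𝓝 0) := by
  have hb : 0 < -Real.log q := neg_pos.2 (Real.log_neg hq0 hq1)
  refine ((tendsto_rpow_mul_exp_neg_mul_atTop_nhds_zero s _ hb).comp
    tendsto_natCast_atTop_atTop).congr fun n => ?_
  simp [Function.comp, ← Real.rpow_natCast, Real.rpow_def_of_pos hq0]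

lemma tendsto_div_rpow_mul_mul_pow_sub (r : ℝ) (n₀ : ℕ) {q : ℝ} (hq0 : 0 ≤ q) (hq1 : q < 1) :
    Tendsto (fun n : ℕ => (n / n₀ : ℝ) ^ r * n * q ^ (n - n₀)) atTop (𝓝 0) := by
  rcases hq0.eq_or_lt with rfl | hq0
  · refine tendsto_const_nhds.congr' ?_
    filter_upwards [eventually_gt_atTop n₀] with n hn
    simp [zero_pow (Nat.sub_ne_zero_of_lt hn)]
  have h := (tendsto_rpow_mul_pow_of_lt_one (r + 1) hq0 hq1).div_const ((n₀ : ℝ) ^ r * q ^ n₀)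
  rw [zero_div] at h
  refine h.congr' ?_
  filter_upwards [eventually_ge_atTop n₀, eventually_gt_atTop 0] with n hn hn0
  rw [Real.div_rpow (Nat.cast_nonneg _) (Nat.cast_nonneg _), pow_sub₀ _ hq0.ne' hn,
    Real.rpow_add_one (by positivity)]
  ring

lemma exists_forall_disjoint_ball_mul_norm {E : Type*} [SeminormedAddCommGroup E] {a b : E}
    {ρ : ℝ} (hρ : 0 < ρ) (hab : 4 * ρ ≤ dist a b) :
    ∃ δ > 0, ∀ (x : E) (h : ℝ), h < δ →
      Disjoint (ball x (h * ‖x‖)) (ball a ρ) ∨ Disjoint (ball x (h * ‖x‖)) (ball b ρ) := by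
  refine ⟨ρ / (2 * (‖a‖ + ρ)), by positivity, fun x h hh => ?_⟩
  by_contra! hmeet
  simp only [not_disjoint_iff, mem_ball] at hmeet
  obtain ⟨⟨u, hux, hua⟩, ⟨v, hvx, hvb⟩⟩ := hmeet
  have hρR : ρ < h * ‖x‖ := by
    linarith [dist_triangle4 a u v b, dist_triangle u x v, dist_comm a u, dist_comm x v]
  have hx : ‖x‖ < ‖a‖ + h * ‖x‖ + ρ := by
    linarith [dist_triangle x a 0, dist_zero_right x, dist_zero_right a, dist_triangle x u a,
      dist_comm x u]
  have hxpos : 0 < ‖x‖ := by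
    by_contra! hx0
    rw [le_antisymm hx0 (norm_nonneg x), mul_zero] at hρR
    exact hρR.not_gt hρ
  have hhδ : h * (2 * (‖a‖ + ρ)) < ρ := by
    rwa [lt_div_iff₀ (by positivity)] at hh
  nlinarith [norm_nonneg a]

lemma exists_ne_mem_support {X : Type*} [TopologicalSpace X] [HereditarilyLindelofSpace X]
    [MeasurableSpace X] [MeasurableSingletonClass X] {μ : Measure X} [IsProbabilityMeasure μ]
    (hμ : ∀ a, μ {a} ≠ 1) : ∃ a ∈ μ.support, ∃ b ∈ μ.support, a ≠ b := by
  obtain ⟨a, ha⟩ := Measure.nonempty_support (IsProbabilityMeasure.ne_zero μ)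
  refine ⟨a, ha, ?_⟩
  by_contra! hsupp
  refine hμ a ((prob_compl_eq_zero_iff (measurableSet_singleton a)).1 ?_)
  exact measure_mono_null (fun y hy hys => hy (hsupp y hys).symm) Measure.measure_compl_support

lemma exists_forall_measure_ball_mul_norm_le {E : Type*} [NormedAddCommGroup E]
    [HereditarilyLindelofSpace E] [MeasurableSpace E] [OpensMeasurableSpace E]
    [MeasurableSingletonClass E] {μ : Measure E} [IsProbabilityMeasure μ]
    (hμ : ∀ a, μ {a} ≠ 1) :
    ∃ δ > 0, ∃ q : ℝ, 0 ≤ q ∧ q < 1 ∧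
      ∀ (x : E) (h : ℝ), h < δ → μ (ball x (h * ‖x‖)) ≤ ENNReal.ofReal q := by
  obtain ⟨a, ha, b, hb, hab⟩ := exists_ne_mem_support hμ
  set ρ := dist a b / 4
  have hρ : 0 < ρ := by have := dist_pos.2 hab; positivity
  obtain ⟨δ, hδ, hdisj⟩ := exists_forall_disjoint_ball_mul_norm hρ (a := a) (b := b)
    (show 4 * (dist a b / 4) ≤ dist a b by linarith)
  set η := min (μ (ball a ρ)) (μ (ball b ρ))
  have hη : 0 < η := lt_min ((Measure.mem_support_iff_forall a).1 ha _ (ball_mem_nhds a hρ))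
    ((Measure.mem_support_iff_forall b).1 hb _ (ball_mem_nhds b hρ))
  have hle : ∀ c, η ≤ μ (ball c ρ) → ∀ s, Disjoint s (ball c ρ) → μ s ≤ 1 - η :=
    fun c hc s hs => calc
      μ s ≤ μ (ball c ρ)ᶜ := measure_mono hs.subset_compl_right
      _ = 1 - μ (ball c ρ) := prob_compl_eq_one_sub measurableSet_ball
      _ ≤ 1 - η := tsub_le_tsub_left hc 1
  refine ⟨δ, hδ, (1 - η).toReal, ENNReal.toReal_nonneg, ENNReal.toReal_lt_of_lt_ofReal ?_,
    fun x h hh => ?_⟩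
  · simpa using ENNReal.sub_lt_self ENNReal.one_ne_top one_ne_zero hη.ne'
  rw [ENNReal.ofReal_toReal (ENNReal.sub_ne_top ENNReal.one_ne_top)]
  rcases hdisj x h hh with hd | hd
  · exact hle a (min_le_left _ _) _ hd
  · exact hle b (min_le_right _ _) _ hd

lemma Rint_eq_zero_of_measure_singleton_eq_one {μ : Measure ℝ} [IsProbabilityMeasure μ] {a : ℝ}
    (ha : μ {a} = 1) (r : ℝ) (n : ℕ) (δ : ℝ) : Rint μ r n δ = 0 := by
  have hae : ∀ᵐ x ∂μ, x ∉ ({a}ᶜ : Set ℝ) := measure_eq_zero_iff_ae_notMem.1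
    ((prob_compl_eq_zero_iff (measurableSet_singleton a)).2 ha)
  refine (setLIntegral_congr_fun_ae isOpen_ne.measurableSet ?_).trans lintegral_zero
  filter_upwards [hae] with x hx _
  rw [notMem_compl_iff, mem_singleton_iff] at hx
  subst hx
  refine (setLIntegral_congr_fun measurableSet_Ioo fun h _ => ?_).trans lintegral_zero
  rw [ha, one_pow, tsub_eq_zero_of_le (pow_le_one' prob_le_one _), mul_zero]

lemma Rint_le_mul_Rint {μ : Measure ℝ} [IsFiniteMeasure μ] (r : ℝ) {δ q : ℝ} (hq0 : 0 ≤ q)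
    (hq : ∀ x ≠ 0, ∀ h ∈ Ioo 0 δ, μ (ball x (h * |x|)) ≤ ENNReal.ofReal q)
    {n₀ n : ℕ} (hn₀ : 2 ≤ n₀) (hn : n₀ ≤ n) :
    Rint μ r n δ ≤ ENNReal.ofReal ((n / n₀ : ℝ) ^ r * n * q ^ (n - n₀)) * Rint μ r n₀ δ := by
  rw [Rint, Rint, ← lintegral_const_mul' _ _ ENNReal.ofReal_ne_top]
  refine setLIntegral_mono' isOpen_ne.measurableSet fun x hx => ?_
  rw [← lintegral_const_mul' _ _ ENNReal.ofReal_ne_top]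
  refine setLIntegral_mono' measurableSet_Ioo fun h hh => ?_
  have hp : μ {x} ≤ μ (ball x (h * |x|)) :=
    measure_mono (singleton_subset_iff.2 (mem_ball_self (mul_pos hh.1 (abs_pos.2 hx))))
  have key := ENNReal.pow_sub_pow_le_mul_pow_mul_pow_sub_pow hp (hq x hx h hh)
    (measure_ne_top _ _) (a := n₀ - 1) (N := n - 1) (by omega) (by omega)
  rw [show n - 1 - (n₀ - 1) = n - n₀ by omega] at key
  have hn_split : (n : ℝ) ^ r = (n / n₀ : ℝ) ^ r * (n₀ : ℝ) ^ r := by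
    rw [← Real.mul_rpow (by positivity) (by positivity), div_mul_cancel₀ _ (by positivity)]
  calc ENNReal.ofReal ((n : ℝ) ^ r * h ^ (-(r + 1))) *
        (μ (ball x (h * |x|)) ^ (n - 1) - μ {x} ^ (n - 1))
      ≤ ENNReal.ofReal ((n / n₀ : ℝ) ^ r) * ENNReal.ofReal ((n₀ : ℝ) ^ r * h ^ (-(r + 1))) *
        ((n - 1 : ℕ) * ENNReal.ofReal q ^ (n - n₀) *
          (μ (ball x (h * |x|)) ^ (n₀ - 1) - μ {x} ^ (n₀ - 1))) := by
        rw [hn_split, mul_assoc, ENNReal.ofReal_mul (by positivity)]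
        gcongr
    _ = ENNReal.ofReal ((n / n₀ : ℝ) ^ r) * ((n - 1 : ℕ) : ℝ≥0∞) * ENNReal.ofReal q ^ (n - n₀) *
        (ENNReal.ofReal ((n₀ : ℝ) ^ r * h ^ (-(r + 1))) *
          (μ (ball x (h * |x|)) ^ (n₀ - 1) - μ {x} ^ (n₀ - 1))) := by ring
    _ ≤ ENNReal.ofReal ((n / n₀ : ℝ) ^ r * n * q ^ (n - n₀)) *
        (ENNReal.ofReal ((n₀ : ℝ) ^ r * h ^ (-(r + 1))) *
          (μ (ball x (h * |x|)) ^ (n₀ - 1) - μ {x} ^ (n₀ - 1))) := by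
        rw [ENNReal.ofReal_mul (p := (n / n₀ : ℝ) ^ r * n) (by positivity),
          ENNReal.ofReal_mul (p := (n / n₀ : ℝ) ^ r) (by positivity), ENNReal.ofReal_pow hq0,
          ENNReal.ofReal_natCast]
        gcongr
        exact n.sub_le 1

theorem exists_delta_Rint_tendsto_zero_general (μ : Measure ℝ) [IsProbabilityMeasure μ]
    (r : ℝ) (n₀ : ℕ) (hn₀ : 2 ≤ n₀)
    (hfin : ∀ n, n₀ ≤ n → ∀ ε : ℝ, 0 < ε → Rint μ r n ε < ⊤) :
    ∃ δ : ℝ, 0 < δ ∧ Tendsto (fun n => Rint μ r n δ) atTop (𝓝 0) := by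
  by_cases hdirac : ∃ a, μ {a} = 1
  · obtain ⟨a, ha⟩ := hdirac
    refine ⟨1, one_pos, ?_⟩
    simpa only [Rint_eq_zero_of_measure_singleton_eq_one ha] using tendsto_const_nhds
  push Not at hdirac
  obtain ⟨δ, hδ, q, hq0, hq1, hball⟩ := exists_forall_measure_ball_mul_norm_le hdirac
  refine ⟨δ, hδ, ?_⟩
  have hbound : Tendsto (fun n : ℕ => ENNReal.ofReal ((n / n₀ : ℝ) ^ r * n * q ^ (n - n₀)) *
      Rint μ r n₀ δ) atTop (𝓝 0) := by
    simpa using ENNReal.Tendsto.mul_const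
      (ENNReal.tendsto_ofReal (tendsto_div_rpow_mul_mul_pow_sub r n₀ hq0 hq1))
      (Or.inr (hfin n₀ le_rfl δ hδ).ne)
  refine tendsto_of_tendsto_of_tendsto_of_le_of_le' tendsto_const_nhds hbound
    (Eventually.of_forall fun _ => zero_le) ?_
  filter_upwards [eventually_ge_atTop n₀] with n hn
  exact Rint_le_mul_Rint r hq0 (fun x _ h hh => hball x h hh.2) hn₀ hn

/-- Lemma (Lemma `lem3`): if there is an `n₀ ≥ 2` such that `R_{n,ε} < ∞` for all `n ≥ n₀`
and all `ε > 0`, then there exists `δ > 0` with `lim_{n→∞} R_{n,δ} = 0`. -/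
theorem exists_delta_Rint_tendsto_zero (μ : Measure ℝ) [IsProbabilityMeasure μ]
    (r : ℝ) (hr : 0 < r) (n₀ : ℕ) (hn₀ : 2 ≤ n₀)
    (hfin : ∀ n, n₀ ≤ n → ∀ ε : ℝ, 0 < ε → Rint μ r n ε < ⊤) :
    ∃ δ : ℝ, 0 < δ ∧ Tendsto (fun n => Rint μ r n δ) atTop (𝓝 0) :=
  exists_delta_Rint_tendsto_zero_general μ r n₀ hn₀ hfin
end
end
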